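/- arXiv:2111.06470 — 6 statements merged into one kernel-verified Lean document; each statement's English description precedes it below -/
import Mathlib

section
/- With the same setup as in the lemma on T(a,b,c): if c = 0 and a = b = 0 then T(a,b,c) = (q-1)(q^2-1); if c = 0 and exactly one of a, b is zero then T(a,b,c) = 1 - q^2; if c = 0 and a, b ∈ F_q^* then T(a,b,c) = q + 1; if c ≠ 0 and a = b = 0 then T(a,b,c) = 1 - q. -/
/-! For `c = 0` the sum over `y` is the orthogonality relation of `χ`, so `T` is `q` times the
number of `x ∈ F_{q²}^*` with `a N(x)^{e₁} + b N(x)^{e₂} = 0`, minus `q² - 1`. When `a b ≠ 0` these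
`x` form a fibre of the surjection `x ↦ N(x)^{e₂ - e₁}` onto `F_q^*`, of size `q + 1`.
For `a = b = 0` and `c ≠ 0`, the homomorphism `(y, x) ↦ y x^{e₃}` from `F_q^* × F_{q²}^*` onto
`F_{q²}^*` is surjective since `N(x) = x^{q+1}` and `gcd(q + 1, e₃) = 1`, so `T` is `q - 1` times
the sum of `χ'` over `F_{q²}^*`, which is `-1`. -/

/-- The canonical additive character of a finite field of characteristic `p`. -/
noncomputable def canAddChar (p : ℕ) (F : Type) [Field F] [Fintype F]
    [Algebra (ZMod p) F] (x : F) : ℂ :=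
  Complex.exp (2 * Real.pi * Complex.I * ((Algebra.trace (ZMod p) F x).val : ℂ) / p)

/-- The character sum `T(a,b,c) = Σ_{y ∈ F^*} Σ_{x ∈ E^*}
`χ(y·a·N(x)^{e₁} + y·b·N(x)^{e₂})·χ'(y·c·x^{e₃})`, where `F = F_q`, `E = F_{q²}`,
`χ, χ'` are the canonical additive characters and `N = Algebra.norm F` (`N(x) = x^{q+1}`). -/
noncomputable def Tsum (p : ℕ) (F E : Type) [Field F] [Fintype F] [DecidableEq F]
    [Field E] [Fintype E] [DecidableEq E] [Algebra (ZMod p) F] [Algebra (ZMod p) E]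
    [Algebra F E] (e₁ e₂ e₃ : ℤ) (a b : F) (c : E) : ℂ :=
  ∑ y ∈ Finset.univ.filter (fun y : F => y ≠ 0),
    ∑ x ∈ Finset.univ.filter (fun x : E => x ≠ 0),
      canAddChar p F (y * a * (Algebra.norm F x) ^ e₁ + y * b * (Algebra.norm F x) ^ e₂) *
        canAddChar p E (algebraMap F E y * c * x ^ e₃)

open Finset Function

lemma canAddChar_zero (p : ℕ) (K : Type) [Field K] [Fintype K] [Algebra (ZMod p) K] :
    canAddChar p K 0 = 1 := by
  simp [canAddChar]

section AdditiveCharacter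

variable (p : ℕ) [Fact p.Prime] (K : Type) [Field K] [Fintype K] [Algebra (ZMod p) K]

noncomputable def canAddCharHom : AddChar K ℂ :=
  ZMod.stdAddChar.compAddMonoidHom (Algebra.trace (ZMod p) K).toAddMonoidHom

lemma canAddCharHom_apply (x : K) : canAddCharHom p K x = canAddChar p K x := by
  rw [canAddCharHom, AddChar.compAddMonoidHom_apply, ZMod.stdAddChar_apply, ZMod.toCircle_apply]
  rfl

lemma canAddCharHom_ne_one : canAddCharHom p K ≠ 1 := by
  obtain ⟨v, hv⟩ := Algebra.trace_surjective (ZMod p) K 1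
  refine AddChar.ne_one_iff.mpr ⟨v, fun h => one_ne_zero (ZMod.injective_stdAddChar (N := p) ?_)⟩
  rwa [canAddCharHom, AddChar.compAddMonoidHom_apply, LinearMap.toAddMonoidHom_coe, hv,
    ← AddChar.map_zero_eq_one (ZMod.stdAddChar (N := p))] at h

variable [DecidableEq K]

lemma sum_canAddChar_mul (t : K) :
    ∑ y : K, canAddChar p K (y * t) = if t = 0 then (Fintype.card K : ℂ) else 0 := by
  simp_rw [← canAddCharHom_apply]
  exact (AddChar.sum_mulShift t (.of_ne_one (canAddCharHom_ne_one p K))).trans (by push_cast; rfl)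

lemma sum_ne_zero_canAddChar_mul (t : K) :
    ∑ y ∈ univ.filter (· ≠ 0), canAddChar p K (y * t) =
      (if t = 0 then (Fintype.card K : ℂ) else 0) - 1 := by
  rw [filter_ne', sum_erase_eq_sub (mem_univ 0), sum_canAddChar_mul, zero_mul, canAddChar_zero]

end AdditiveCharacter

lemma sum_ne_zero_eq_sum_units {K M : Type*} [GroupWithZero K] [Fintype K] [DecidableEq K]
    [AddCommMonoid M] (f : K → M) :
    ∑ x ∈ univ.filter (· ≠ 0), f x = ∑ u : Kˣ, f u :=
  (sum_subtype _ (by simp) f).trans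
    (Fintype.sum_equiv unitsEquivNeZero.symm _ _ fun _ => rfl)

lemma MonoidHom.sum_comp_of_surjective {G H M : Type*} [Group G] [Fintype G] [Group H]
    [Fintype H] [DecidableEq H] [AddCommMonoid M] {φ : G →* H} (hφ : Surjective φ)
    (f : H → M) :
    ∑ g, f (φ g) = (Nat.card G / Nat.card H) • ∑ h, f h := by
  have hfiber : ∀ h, #{g | φ g = h} = #{g | φ g = 1} := fun h =>
    MonoidHom.card_fiber_eq_of_mem_range φ (hφ h) (hφ 1)
  have hcard : Nat.card G = #{g | φ g = 1} * Nat.card H := by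
    rw [Nat.card_eq_fintype_card, ← card_univ,
      card_eq_sum_card_fiberwise fun g _ => mem_univ (φ g), sum_congr rfl fun h _ => hfiber h,
      sum_const, smul_eq_mul, mul_comm, card_univ, Nat.card_eq_fintype_card]
  rw [hcard, Nat.mul_div_cancel _ Nat.card_pos, ← sum_fiberwise univ φ, smul_sum]
  refine sum_congr rfl fun h _ => ?_
  rw [sum_congr rfl fun g hg => by rw [(mem_filter.mp hg).2], sum_const, hfiber]

lemma zpow_surjective_of_gcd_card_eq_one {G : Type*} [Group G] [Finite G] {n : ℤ}
    (h : Int.gcd (Nat.card G) n = 1) : Surjective fun g : G => g ^ n := by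
  intro t
  have hbez : (Nat.card G : ℤ) * Int.gcdA (Nat.card G) n + n * Int.gcdB (Nat.card G) n = 1 := by
    rw [← Int.gcd_eq_gcd_ab, h, Nat.cast_one]
  refine ⟨t ^ Int.gcdB (Nat.card G) n, ?_⟩
  calc (t ^ Int.gcdB (Nat.card G) n) ^ n
      = t ^ ((Nat.card G : ℤ) * Int.gcdA (Nat.card G) n + n * Int.gcdB (Nat.card G) n) := by
        rw [zpow_add, zpow_mul t (Nat.card G : ℤ), zpow_natCast, pow_card_eq_one', one_zpow,
          one_mul, ← zpow_mul, mul_comm]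
    _ = t := by rw [hbez, zpow_one]

lemma sq_sub_one_div_sub_one {q : ℕ} (hq : 1 < q) : (q ^ 2 - 1) / (q - 1) = q + 1 := by
  rw [show q ^ 2 - 1 = (q + 1) * (q - 1) by simpa using Nat.sq_sub_sq q 1,
    Nat.mul_div_cancel _ (by omega)]

section QuadraticExtension

variable {q : ℕ} {F E : Type*} [Field F] [Fintype F] [Field E] [Fintype E]

lemma card_units_div_card_units (hF : Fintype.card F = q) (hE : Fintype.card E = q ^ 2) :
    Nat.card Eˣ / Nat.card Fˣ = q + 1 := by
  rw [Nat.card_units, Nat.card_units, Nat.card_eq_fintype_card, Nat.card_eq_fintype_card, hF, hE,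
    sq_sub_one_div_sub_one (hF ▸ Fintype.one_lt_card)]

variable [Algebra F E]

lemma algebraMap_norm_eq_pow_succ (hF : Fintype.card F = q) (hE : Fintype.card E = q ^ 2)
    (x : E) : algebraMap F E (Algebra.norm F x) = x ^ (q + 1) := by
  rw [FiniteField.algebraMap_norm_eq_pow, Nat.card_eq_fintype_card, Nat.card_eq_fintype_card,
    hF, hE, sq_sub_one_div_sub_one (hF ▸ Fintype.one_lt_card)]

lemma surjective_coprod_unitsMap_algebraMap_zpow (hF : Fintype.card F = q)
    (hE : Fintype.card E = q ^ 2) {n : ℤ} (hn : Int.gcd (q + 1) n = 1) :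
    Surjective ((Units.map (algebraMap F E).toMonoidHom).coprod (zpowGroupHom n) :
      Fˣ × Eˣ →* Eˣ) := by
  intro w
  -- `w = (w ^ (q + 1)) ^ A * (w ^ B) ^ n` for Bézout coefficients `A, B` of `q + 1` and `n`,
  -- and `w ^ (q + 1)` is the norm of `w`
  have hbez : ((q : ℤ) + 1) * Int.gcdA (q + 1) n + n * Int.gcdB (q + 1) n = 1 := by
    rw [← Int.gcd_eq_gcd_ab, hn, Nat.cast_one]
  have hnorm : Units.map (algebraMap F E).toMonoidHom (Units.map (Algebra.norm F : E →* F) w) =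
      w ^ ((q : ℤ) + 1) := by
    ext
    simpa [← zpow_natCast] using algebraMap_norm_eq_pow_succ hF hE (w : E)
  refine ⟨(Units.map (Algebra.norm F : E →* F) w ^ Int.gcdA (q + 1) n, w ^ Int.gcdB (q + 1) n), ?_⟩
  rw [MonoidHom.coprod_apply, map_zpow, hnorm, zpowGroupHom_apply, ← zpow_mul, ← zpow_mul,
    mul_comm _ n, ← zpow_add, hbez, zpow_one]

end QuadraticExtension

lemma natCast_card_units {K R : Type*} [GroupWithZero K] [Fintype K] [DecidableEq K]
    [AddGroupWithOne R] : (Fintype.card Kˣ : R) = Fintype.card K - 1 := by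
  rw [Fintype.card_units, Nat.cast_sub Fintype.card_pos, Nat.cast_one]

lemma add_mul_zpow_eq_zero_iff {K : Type*} [Field K] {a b t : K} (hb : b ≠ 0) (ht : t ≠ 0)
    (m n : ℤ) : a * t ^ m + b * t ^ n = 0 ↔ t ^ (n - m) = -(a / b) := by
  have hm : t ^ m ≠ 0 := zpow_ne_zero m ht
  rw [zpow_sub₀ ht]
  constructor <;> intro h
  · field_simp
    linear_combination h
  · field_simp at h
    linear_combination h

section Tsum

variable (p : ℕ) [Fact p.Prime] {q : ℕ} (F E : Type) [Field F] [Fintype F] [DecidableEq F]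
  [Field E] [Fintype E] [DecidableEq E] [Algebra (ZMod p) F] [Algebra (ZMod p) E]
  [Algebra F E] (e₁ e₂ e₃ : ℤ)

lemma Tsum_zero_right (a b : F) :
    Tsum p F E e₁ e₂ e₃ a b 0 = ∑ x : Eˣ,
      ((if a * Algebra.norm F (x : E) ^ e₁ + b * Algebra.norm F (x : E) ^ e₂ = 0
        then (Fintype.card F : ℂ) else 0) - 1) := by
  rw [Tsum, sum_comm, sum_ne_zero_eq_sum_units]
  refine sum_congr rfl fun x _ => ?_
  simp_rw [mul_zero, zero_mul, canAddChar_zero, mul_one, mul_assoc, ← mul_add]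
  exact sum_ne_zero_canAddChar_mul p F _

lemma Tsum_zero_right_of_ne_zero (hF : Fintype.card F = q) (hE : Fintype.card E = q ^ 2)
    (he₁₂ : Int.gcd (q - 1) (e₂ - e₁) = 1) {a b : F} (ha : a ≠ 0) (hb : b ≠ 0) :
    Tsum p F E e₁ e₂ e₃ a b 0 = q + 1 := by
  set φ : Eˣ →* Fˣ := (zpowGroupHom (e₂ - e₁)).comp (Units.map (Algebra.norm F : E →* F))
  set w₀ : Fˣ := Units.mk0 (-(a / b)) (by simp [ha, hb])
  have hφ : Surjective φ := by
    refine (zpow_surjective_of_gcd_card_eq_one ?_).comp (FiniteField.unitsMap_norm_surjective F E)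
    rwa [Nat.card_units, Nat.card_eq_fintype_card, hF, Nat.cast_sub (hF ▸ Fintype.card_pos),
      Nat.cast_one]
  have hcond : ∀ x : Eˣ, a * Algebra.norm F (x : E) ^ e₁ + b * Algebra.norm F (x : E) ^ e₂ = 0 ↔
      φ x = w₀ := fun x => by
    rw [add_mul_zpow_eq_zero_iff hb (Algebra.norm_ne_zero_iff.mpr x.ne_zero), Units.ext_iff]
    simp [φ, w₀, Units.val_zpow_eq_zpow_val]
  have hfiber : ∑ w : Fˣ, ((if w = w₀ then (q : ℂ) else 0) - 1) = 1 := by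
    rw [sum_sub_distrib, sum_ite_eq', if_pos (mem_univ _), sum_const, card_univ, nsmul_eq_mul,
      mul_one, natCast_card_units, hF]
    ring
  simp_rw [Tsum_zero_right, hcond, hF]
  rw [φ.sum_comp_of_surjective hφ fun w => (if w = w₀ then (q : ℂ) else 0) - 1, hfiber,
    card_units_div_card_units hF hE]
  simp

lemma Tsum_zero_zero_of_ne_zero (hF : Fintype.card F = q) (hE : Fintype.card E = q ^ 2)
    (he₃ : Int.gcd (q + 1) e₃ = 1) {c : E} (hc : c ≠ 0) :
    Tsum p F E e₁ e₂ e₃ 0 0 c = 1 - q := by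
  set φ : Fˣ × Eˣ →* Eˣ := (Units.map (algebraMap F E).toMonoidHom).coprod (zpowGroupHom e₃)
  have hunits : ∑ w : Eˣ, canAddChar p E (c * w) = -1 := by
    simp_rw [← sum_ne_zero_eq_sum_units fun w => canAddChar p E (c * w), mul_comm c,
      sum_ne_zero_canAddChar_mul, if_neg hc, zero_sub]
  have hcard : Nat.card (Fˣ × Eˣ) / Nat.card Eˣ = q - 1 := by
    rw [Nat.card_prod, Nat.mul_div_cancel _ Nat.card_pos, Nat.card_units, Nat.card_eq_fintype_card,
      hF]
  calc Tsum p F E e₁ e₂ e₃ 0 0 c = ∑ yx : Fˣ × Eˣ, canAddChar p E (c * φ yx) := by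
        rw [Tsum, Fintype.sum_prod_type, sum_ne_zero_eq_sum_units]
        refine sum_congr rfl fun y _ => ?_
        rw [sum_ne_zero_eq_sum_units]
        refine sum_congr rfl fun x _ => ?_
        simp only [φ, mul_zero, zero_mul, add_zero, canAddChar_zero, one_mul,
          MonoidHom.coprod_apply, Units.val_mul, Units.coe_map, zpowGroupHom_apply,
          Units.val_zpow_eq_zpow_val, RingHom.toMonoidHom_eq_coe, MonoidHom.coe_coe]
        ring_nf
    _ = 1 - q := by
        rw [φ.sum_comp_of_surjective (surjective_coprod_unitsMap_algebraMap_zpow hF hE he₃)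
          fun w => canAddChar p E (c * w), hunits, hcard, nsmul_eq_mul,
          Nat.cast_sub (hF ▸ Fintype.card_pos)]
        push_cast
        ring

end Tsum

theorem Tsum_values_other_general (p q : ℕ) [Fact p.Prime] (F E : Type) [Field F] [Fintype F]
    [DecidableEq F] [Field E] [Fintype E] [DecidableEq E] [Algebra (ZMod p) F]
    [Algebra (ZMod p) E] [Algebra F E] (hF : Fintype.card F = q) (hE : Fintype.card E = q ^ 2)
    (e₁ e₂ e₃ : ℤ) (he₃ : Int.gcd (q + 1) e₃ = 1)
    (he₁₂ : Int.gcd (q - 1) (e₂ - e₁) = 1)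
    (a b : F) (c : E) :
    (c = 0 → a = 0 → b = 0 →
        Tsum p F E e₁ e₂ e₃ a b c = ((q : ℂ) - 1) * ((q : ℂ) ^ 2 - 1)) ∧
      (c = 0 → (a = 0 ∧ b ≠ 0) ∨ (a ≠ 0 ∧ b = 0) →
        Tsum p F E e₁ e₂ e₃ a b c = 1 - (q : ℂ) ^ 2) ∧
      (c = 0 → a ≠ 0 → b ≠ 0 →
        Tsum p F E e₁ e₂ e₃ a b c = (q : ℂ) + 1) ∧
      (c ≠ 0 → a = 0 → b = 0 →
        Tsum p F E e₁ e₂ e₃ a b c = 1 - (q : ℂ)) := by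
  have hcardE : (Fintype.card Eˣ : ℂ) = q ^ 2 - 1 := by
    rw [natCast_card_units, hE, Nat.cast_pow]
  refine ⟨?_, ?_, ?_, ?_⟩
  · rintro rfl rfl rfl
    simp only [Tsum_zero_right, zero_mul, add_zero, ↓reduceIte, sum_const, card_univ,
      nsmul_eq_mul, hcardE, hF]
    ring
  · rintro rfl h
    have hne : ∀ x : Eˣ, a * Algebra.norm F (x : E) ^ e₁ + b * Algebra.norm F (x : E) ^ e₂ ≠ 0 := by
      intro x
      have hN : Algebra.norm F (x : E) ≠ 0 := Algebra.norm_ne_zero_iff.mpr x.ne_zero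
      rcases h with ⟨rfl, hb⟩ | ⟨ha, rfl⟩ <;> simp [*, zpow_ne_zero]
    simp [Tsum_zero_right, hne, hcardE]
  · rintro rfl
    exact Tsum_zero_right_of_ne_zero p F E e₁ e₂ e₃ hF hE he₁₂
  · rintro hc rfl rfl
    exact Tsum_zero_zero_of_ne_zero p F E e₁ e₂ e₃ hF hE he₃ hc

/-- Remaining cases of `T(a,b,c)`: if `c = 0` and `a = b = 0` then `T = (q-1)(q²-1)`;
if `c = 0` and exactly one of `a, b` is zero then `T = 1 - q²`; if `c = 0` and
`a, b ∈ F_q^*` then `T = q + 1`; if `c ≠ 0` and `a = b = 0` then `T = 1 - q`. -/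
theorem Tsum_values_other (p q : ℕ) [Fact p.Prime] (F E : Type) [Field F] [Fintype F]
    [DecidableEq F] [Field E] [Fintype E] [DecidableEq E] [Algebra (ZMod p) F]
    [Algebra (ZMod p) E] [Algebra F E] (hF : Fintype.card F = q) (hE : Fintype.card E = q ^ 2)
    (e₁ e₂ e₃ : ℤ) (he₃ : Int.gcd (q + 1) e₃ = 1)
    (he₁₂ : Int.gcd (q - 1) (e₂ - e₁) = 1) (hcong : ((q : ℤ) - 1) ∣ (e₃ - (e₁ + e₂)))
    (a b : F) (c : E) :
    (c = 0 → a = 0 → b = 0 →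
        Tsum p F E e₁ e₂ e₃ a b c = ((q : ℂ) - 1) * ((q : ℂ) ^ 2 - 1)) ∧
      (c = 0 → (a = 0 ∧ b ≠ 0) ∨ (a ≠ 0 ∧ b = 0) →
        Tsum p F E e₁ e₂ e₃ a b c = 1 - (q : ℂ) ^ 2) ∧
      (c = 0 → a ≠ 0 → b ≠ 0 →
        Tsum p F E e₁ e₂ e₃ a b c = (q : ℂ) + 1) ∧
      (c ≠ 0 → a = 0 → b = 0 →
        Tsum p F E e₁ e₂ e₃ a b c = 1 - (q : ℂ)) :=
  Tsum_values_other_general p q F E hF hE e₁ e₂ e₃ he₃ he₁₂ a b c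
end

section
/- Let q > 2 be a prime power, γ a primitive element of F_{q^2}, and e_1, e_2, e_3 integers with gcd(q+1, e_3) = 1, gcd(q-1, e_2-e_1) = 1, e_3 ≡ e_1 + e_2 (mod q-1). The code C = { (a γ^{(q+1)i e_1} + b γ^{(q+1)i e_2} + Tr_{F_{q^2}/F_q}(c γ^{i e_3}))_{i=0}^{q^2-2} : a, b ∈ F_q, c ∈ F_{q^2} } is a linear code over F_q of length q^2 - 1, dimension 4, and minimum Hamming distance q(q-1) - 2. -/
/-!
Pulling the factor `γ^{(q+1)ie₁}` out of the `i`-th coordinate and using `e₃ ≡ e₁ + e₂ (mod q-1)`,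
the coordinate becomes that factor times `P(wᵢ)`, where `P = a + bX^{q+1} + cX + c^qX^q` and
`wᵢ = γ^{i(e₃-(q+1)e₁)}`. The gcd conditions make `e₃ - (q+1)e₁` prime to `q²-1`, so `wᵢ` runs
through `F_{q²}ˣ` exactly once. Hence a nonzero codeword has at most `deg P ≤ q+1` zero coordinates,
with equality for `(a,b,c) = (-1,1,0)`, whose zeros are the `(q+1)`-st roots of unity. As
`q + 1 < q² - 1`, the encoding `(a,b,c) ↦ codeword` is injective, so the dimension is `1 + 1 + 2`.
-/

/-- The codeword of `C_{((q+1)e₁,(q+1)e₂,e₃)}` associated with `(a,b,c) ∈ F_q × F_q × F_{q²}`: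
`(a·γ^{(q+1)ie₁} + b·γ^{(q+1)ie₂} + Tr_{E/F}(c·γ^{ie₃}))_{i=0}^{q²-2}`, where
`Tr_{E/F}(x) = x + x^q`. -/
def codeword (q : ℕ) (F E : Type) [Field F] [Field E] [Algebra F E]
    (γ : E) (e₁ e₂ e₃ : ℤ) (a b : F) (c : E) : Fin (q ^ 2 - 1) → E := fun i =>
  algebraMap F E a * γ ^ (((q : ℤ) + 1) * i * e₁) +
    algebraMap F E b * γ ^ (((q : ℤ) + 1) * i * e₂) +
    (c * γ ^ ((i : ℤ) * e₃) + (c * γ ^ ((i : ℤ) * e₃)) ^ q)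

open Finset Polynomial

theorem IsCoprime.sq_sub_one_sub_mul {R : Type*} [CommRing R] {m e₁ e₂ e₃ : R}
    (h₃ : IsCoprime (m + 1) e₃) (h₁₂ : IsCoprime (m - 1) (e₂ - e₁))
    (hcong : m - 1 ∣ e₃ - (e₁ + e₂)) : IsCoprime (m ^ 2 - 1) (e₃ - (m + 1) * e₁) := by
  obtain ⟨k, hk⟩ := hcong
  have hplus : IsCoprime (m + 1) (e₃ - (m + 1) * e₁) := by
    simpa [sub_eq_add_neg] using h₃.add_mul_left_right (-e₁)
  have hminus : IsCoprime (m - 1) (e₃ - (m + 1) * e₁) := by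
    convert h₁₂.add_mul_left_right (k - e₁) using 1
    linear_combination hk
  convert hminus.mul_left hplus using 1
  ring

theorem isPrimitiveRoot_of_forall_exists_pow {E : Type*} [Field E] [Fintype E]
    (hE : 2 < Fintype.card E) {γ : E} (hγ : ∀ x : E, x ≠ 0 → ∃ n : ℕ, γ ^ n = x) :
    IsPrimitiveRoot γ (Fintype.card E - 1) := by
  classical
  have hγ0 : γ ≠ 0 := by
    rintro rfl
    have hsub : (univ : Finset E) ⊆ {0, 1} := by
      intro x _
      obtain hx | hx := eq_or_ne x 0
      · simp [hx]
      obtain ⟨_ | n, hn⟩ := hγ x hx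
      · simp [← hn]
      · simp [← hn] at hx
    have := (card_le_card hsub).trans (card_insert_le _ _)
    simp at this
    omega
  refine IsPrimitiveRoot.coe_units_iff (ζ := Units.mk0 γ hγ0).mpr ?_
  rw [← Fintype.card_units, ← Nat.card_eq_fintype_card, ← orderOf_eq_card_of_forall_mem_zpowers]
  · exact IsPrimitiveRoot.orderOf _
  intro x
  obtain ⟨n, hn⟩ := hγ x x.ne_zero
  exact ⟨n, Units.ext (by simpa using hn)⟩

theorem IsPrimitiveRoot.card_filter_pow {R : Type*} [CommRing R] [IsDomain R] {ζ : R} {n : ℕ}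
    (hζ : IsPrimitiveRoot ζ n) (P : R → Prop) [DecidablePred P] :
    #{i : Fin n | P (ζ ^ (i : ℕ))} = #{y ∈ nthRootsFinset n (1 : R) | P y} := by
  rcases Nat.eq_zero_or_pos n with rfl | hn
  · simp
  have : NeZero n := ⟨hn.ne'⟩
  refine card_bij (fun i _ ↦ ζ ^ (i : ℕ)) ?_ ?_ ?_
  · intro i hi
    simp only [mem_filter, mem_univ, true_and] at hi
    simp only [mem_filter, Polynomial.mem_nthRootsFinset hn, hi, and_true]
    rw [← pow_mul, mul_comm, pow_mul, hζ.pow_eq_one, one_pow]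
  · intro i _ j _ hij
    exact Fin.ext (hζ.pow_inj i.isLt j.isLt hij)
  · intro y hy
    simp only [mem_filter, Polynomial.mem_nthRootsFinset hn] at hy
    obtain ⟨i, hi, rfl⟩ := hζ.eq_pow_of_pow_eq_one hy.1
    exact ⟨⟨i, hi⟩, by simpa using hy.2, rfl⟩

theorem Polynomial.card_filter_eval_eq_zero_le {R : Type*} [CommRing R] [IsDomain R]
    [DecidableEq R] {p : R[X]} (hp : p ≠ 0) (s : Finset R) :
    #{y ∈ s | p.eval y = 0} ≤ p.natDegree :=
  card_le_degree_of_subset_roots fun y hy ↦ by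
    simp only [mem_val, mem_filter] at hy
    exact (mem_roots hp).2 hy.2

noncomputable def codewordPoly {R : Type*} [CommRing R] (q : ℕ) (A B c : R) : R[X] :=
  C A + C B * X ^ (q + 1) + (C c * X + C (c ^ q) * X ^ q)

section codewordPoly

variable {R : Type*} [CommRing R] {q : ℕ} {A B c : R}

theorem eval_codewordPoly (y : R) :
    (codewordPoly q A B c).eval y = A + B * y ^ (q + 1) + (c * y + (c * y) ^ q) := by
  simp [codewordPoly, mul_pow]

theorem natDegree_codewordPoly_le : (codewordPoly q A B c).natDegree ≤ q + 1 := by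
  unfold codewordPoly
  compute_degree

theorem codewordPoly_ne_zero (hq : 2 ≤ q) (h : A ≠ 0 ∨ B ≠ 0 ∨ c ≠ 0) :
    codewordPoly q A B c ≠ 0 := by
  have hq₀ : q ≠ 0 := by omega
  have hq₁ : q ≠ 1 := by omega
  intro h0
  have h₀ := congr_arg (coeff · 0) h0
  have h₁ := congr_arg (coeff · 1) h0
  have h₂ := congr_arg (coeff · (q + 1)) h0
  simp [codewordPoly, coeff_X, coeff_C, coeff_X_pow, -map_pow, hq₀, hq₀.symm,
    hq₁.symm] at h₀ h₁ h₂
  tauto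

end codewordPoly

theorem card_filter_codewordPoly_neg_one_one_zero {E : Type*} [Field E] [DecidableEq E] {q : ℕ}
    (hq : 2 ≤ q) {ζ : E} (hζ : IsPrimitiveRoot ζ (q ^ 2 - 1)) :
    #{y ∈ nthRootsFinset (q ^ 2 - 1) (1 : E) | (codewordPoly q (-1) 1 0).eval y = 0} = q + 1 := by
  have hfac : q ^ 2 - 1 = (q + 1) * (q - 1) := by simpa using Nat.sq_sub_sq q 1
  have hpos : 0 < q ^ 2 - 1 := hfac ▸ Nat.mul_pos (by omega) (by omega)
  have hroots : {y ∈ nthRootsFinset (q ^ 2 - 1) (1 : E) | (codewordPoly q (-1) 1 0).eval y = 0} =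
      nthRootsFinset (q + 1) (1 : E) := by
    ext y
    simp only [mem_filter, mem_nthRootsFinset hpos,
      mem_nthRootsFinset (by omega : 0 < q + 1), eval_codewordPoly]
    simp only [one_mul, zero_mul, zero_pow (by omega : q ≠ 0), add_zero, neg_add_eq_zero,
      eq_comm (a := (1 : E))]
    constructor
    · exact And.right
    · intro h
      exact ⟨by rw [hfac, pow_mul, h, one_pow], h⟩
  have hprim : IsPrimitiveRoot (ζ ^ (q - 1)) (q + 1) := by
    simpa [hfac, show q - 1 ≠ 0 by omega] using hζ.pow_of_dvd (show q - 1 ≠ 0 by omega)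
      (Dvd.intro_left _ hfac.symm)
  rw [hroots, hprim.card_nthRootsFinset]

section codeword

variable {q : ℕ} {F E : Type} [Field F] [Field E] [Algebra F E] {γ : E} {e₁ e₂ e₃ : ℤ}

theorem codeword_apply_eq_mul_eval (hγ : IsPrimitiveRoot γ (q ^ 2 - 1))
    (hcong : (q : ℤ) - 1 ∣ e₃ - (e₁ + e₂)) (a b : F) (c : E) (i : Fin (q ^ 2 - 1)) :
    codeword q F E γ e₁ e₂ e₃ a b c i = γ ^ (((q : ℤ) + 1) * i * e₁) *
      (codewordPoly q (algebraMap F E a) (algebraMap F E b) c).eval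
        (γ ^ ((i : ℤ) * (e₃ - (q + 1) * e₁))) := by
  obtain ⟨k, hk⟩ := hcong
  have hγ₀ : γ ≠ 0 := hγ.ne_zero i.pos.ne'
  have hlen : ((q ^ 2 - 1 : ℕ) : ℤ) = (q : ℤ) ^ 2 - 1 := by
    have : 1 ≤ q ^ 2 := by have := i.pos; omega
    push_cast [this]
    ring
  have hper (m n : ℤ) (h : (q : ℤ) ^ 2 - 1 ∣ m - n) : γ ^ m = γ ^ n := by
    rw [← sub_add_cancel m n, zpow_add₀ hγ₀, (hγ.zpow_eq_one_iff_dvd _).2 (hlen ▸ h), one_mul]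
  have h₂ : γ ^ (((q : ℤ) + 1) * i * e₂) = γ ^ (((q : ℤ) + 1) * i * e₁) *
      (γ ^ ((i : ℤ) * (e₃ - (q + 1) * e₁))) ^ (q + 1) := by
    rw [← zpow_natCast, ← zpow_mul, ← zpow_add₀ hγ₀]
    exact hper _ _ ⟨i * (e₁ - k), by push_cast; linear_combination -(q + 1) * (i : ℤ) * hk⟩
  have h₃ : γ ^ ((i : ℤ) * e₃) = γ ^ (((q : ℤ) + 1) * i * e₁) *
      γ ^ ((i : ℤ) * (e₃ - (q + 1) * e₁)) := by
    rw [← zpow_add₀ hγ₀]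
    ring_nf
  have h₄ : (γ ^ ((i : ℤ) * e₃)) ^ q = γ ^ (((q : ℤ) + 1) * i * e₁) *
      (γ ^ ((i : ℤ) * (e₃ - (q + 1) * e₁))) ^ q := by
    simp only [← zpow_natCast, ← zpow_mul, ← zpow_add₀ hγ₀]
    exact hper _ _ ⟨i * e₁, by ring⟩
  rw [eval_codewordPoly, codeword, mul_pow c, h₄, h₂, h₃]
  ring

theorem card_filter_codeword_eq_zero [DecidableEq E] (hγ : IsPrimitiveRoot γ (q ^ 2 - 1))
    (hcop : IsCoprime (e₃ - (q + 1) * e₁) ((q ^ 2 - 1 : ℕ) : ℤ))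
    (hcong : (q : ℤ) - 1 ∣ e₃ - (e₁ + e₂)) (a b : F) (c : E) :
    #{i | codeword q F E γ e₁ e₂ e₃ a b c i = 0} = #{y ∈ nthRootsFinset (q ^ 2 - 1) (1 : E) |
      (codewordPoly q (algebraMap F E a) (algebraMap F E b) c).eval y = 0} := by
  have hζ := hγ.zpow_of_gcd_eq_one _ (Int.isCoprime_iff_gcd_eq_one.1 hcop)
  rw [← hζ.card_filter_pow]
  refine congr_arg card (filter_congr fun i _ ↦ ?_)
  rw [codeword_apply_eq_mul_eval hγ hcong, mul_eq_zero,
    or_iff_right (zpow_ne_zero _ (hγ.ne_zero i.pos.ne')), ← zpow_natCast, ← zpow_mul, mul_comm]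

theorem card_filter_codeword_eq_zero_le [DecidableEq E] (hq : 2 ≤ q)
    (hγ : IsPrimitiveRoot γ (q ^ 2 - 1))
    (hcop : IsCoprime (e₃ - (q + 1) * e₁) ((q ^ 2 - 1 : ℕ) : ℤ))
    (hcong : (q : ℤ) - 1 ∣ e₃ - (e₁ + e₂)) {a b : F} {c : E} (h : a ≠ 0 ∨ b ≠ 0 ∨ c ≠ 0) :
    #{i | codeword q F E γ e₁ e₂ e₃ a b c i = 0} ≤ q + 1 := by
  rw [card_filter_codeword_eq_zero hγ hcop hcong]
  refine (card_filter_eval_eq_zero_le (codewordPoly_ne_zero hq ?_) _).trans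
    natDegree_codewordPoly_le
  simpa only [ne_eq, FaithfulSMul.algebraMap_eq_zero_iff] using h

theorem card_filter_codeword_neg_one_one_zero [DecidableEq E] (hq : 2 ≤ q)
    (hγ : IsPrimitiveRoot γ (q ^ 2 - 1))
    (hcop : IsCoprime (e₃ - (q + 1) * e₁) ((q ^ 2 - 1 : ℕ) : ℤ))
    (hcong : (q : ℤ) - 1 ∣ e₃ - (e₁ + e₂)) :
    #{i | codeword q F E γ e₁ e₂ e₃ (-1 : F) 1 0 i = 0} = q + 1 := by
  rw [card_filter_codeword_eq_zero hγ hcop hcong, map_neg, map_one]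
  exact card_filter_codewordPoly_neg_one_one_zero hq hγ

end codeword

theorem hammingNorm_eq_card_sub_card_filter_eq_zero {ι : Type*} [Fintype ι] {β : ι → Type*}
    [∀ i, Zero (β i)] [∀ i, DecidableEq (β i)] (v : ∀ i, β i) :
    hammingNorm v = Fintype.card ι - #{i | v i = 0} := by
  rw [← card_univ, ← card_filter_add_card_filter_not (s := univ) (fun i ↦ v i ≠ 0)]
  simp [hammingNorm]

theorem LinearMap.injective_of_card_filter_eq_zero_lt {R V ι M : Type*} [Semiring R]
    [AddCommGroup V] [Module R V] [Fintype ι] [AddCommMonoid M] [Module R M] [DecidableEq M]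
    (Φ : V →ₗ[R] ι → M) (h : ∀ t ≠ 0, #{i | Φ t i = 0} < Fintype.card ι) :
    Function.Injective Φ :=
  (injective_iff_map_eq_zero Φ).2 fun t ht ↦ by_contra fun ht₀ ↦ (h t ht₀).ne (by simp [ht])

theorem Nat.mul_sub_one_sub_two (q : ℕ) : q * (q - 1) - 2 = q ^ 2 - 1 - (q + 1) := by
  rcases q with _ | q
  · rfl
  · rw [Nat.add_sub_cancel]
    ring_nf
    omega

theorem Module.finrank_eq_of_card_eq_pow {K V : Type*} [Field K] [Fintype K] [AddCommGroup V]
    [Module K V] [Fintype V] {n : ℕ} (h : Fintype.card V = Fintype.card K ^ n) :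
    Module.finrank K V = n :=
  Nat.pow_right_injective Fintype.one_lt_card (Module.card_eq_pow_finrank.symm.trans h)

noncomputable def codewordMap {q : ℕ} (F E : Type) [Field F] [Fintype F] [Field E] [Algebra F E]
    (hF : Fintype.card F = q) (γ : E) (e₁ e₂ e₃ : ℤ) : F × F × E →ₗ[F] Fin (q ^ 2 - 1) → E where
  toFun t := codeword q F E γ e₁ e₂ e₃ t.1 t.2.1 t.2.2
  map_add' s t := by
    have hfrob := map_add (FiniteField.frobeniusAlgHom F E)
    simp only [FiniteField.frobeniusAlgHom_apply, hF] at hfrob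
    ext i
    simp only [codeword, Prod.fst_add, Prod.snd_add, map_add, Pi.add_apply, add_mul, hfrob]
    ring
  map_smul' s t := by
    have hfrob := map_smul (FiniteField.frobeniusAlgHom F E) s
    simp only [FiniteField.frobeniusAlgHom_apply, Algebra.smul_def, hF] at hfrob
    ext i
    simp only [codeword, Prod.smul_fst, Prod.smul_snd, smul_eq_mul, map_mul, RingHom.id_apply,
      Pi.smul_apply]
    simp only [Algebra.smul_def, mul_assoc, hfrob]
    ring

theorem code_is_linear_dim4_mindist_general (q : ℕ) (hq : 2 < q)
    (F E : Type) [Field F] [Fintype F] [Field E] [Fintype E] [DecidableEq E]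
    [Algebra F E] (hF : Fintype.card F = q) (hE : Fintype.card E = q ^ 2)
    (γ : E) (hγ : ∀ x : E, x ≠ 0 → ∃ n : ℕ, γ ^ n = x)
    (e₁ e₂ e₃ : ℤ) (he₃ : Int.gcd (q + 1) e₃ = 1)
    (he₁₂ : Int.gcd (q - 1) (e₂ - e₁) = 1) (hcong : ((q : ℤ) - 1) ∣ (e₃ - (e₁ + e₂))) :
    ∃ S : Submodule F (Fin (q ^ 2 - 1) → E),
      (S : Set (Fin (q ^ 2 - 1) → E)) =
          {v | ∃ (a b : F) (c : E), v = codeword q F E γ e₁ e₂ e₃ a b c} ∧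
        Module.finrank F S = 4 ∧
        (∀ v ∈ S, v ≠ 0 → q * (q - 1) - 2 ≤ hammingNorm v) ∧
        (∃ v ∈ S, hammingNorm v = q * (q - 1) - 2) := by
  obtain ⟨Φ, hΦ⟩ : ∃ Φ : F × F × E →ₗ[F] Fin (q ^ 2 - 1) → E,
      ∀ a b c, Φ (a, b, c) = codeword q F E γ e₁ e₂ e₃ a b c :=
    ⟨codewordMap F E hF γ e₁ e₂ e₃, fun _ _ _ ↦ rfl⟩
  have hlt : q + 1 < q ^ 2 - 1 := by nlinarith [Nat.sub_add_cancel (Nat.one_le_pow 2 q (by omega))]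
  have hprim : IsPrimitiveRoot γ (q ^ 2 - 1) :=
    hE ▸ isPrimitiveRoot_of_forall_exists_pow (by omega) hγ
  have hcop : IsCoprime (e₃ - (q + 1) * e₁) ((q ^ 2 - 1 : ℕ) : ℤ) := by
    rw [Nat.cast_sub (by omega), Nat.cast_pow, Nat.cast_one]
    exact (IsCoprime.sq_sub_one_sub_mul (Int.isCoprime_iff_gcd_eq_one.2 he₃)
      (Int.isCoprime_iff_gcd_eq_one.2 he₁₂) hcong).symm
  have hzeros (t : F × F × E) (ht : t ≠ 0) : #{i | Φ t i = 0} ≤ q + 1 := by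
    obtain ⟨a, b, c⟩ := t
    rw [hΦ]
    exact card_filter_codeword_eq_zero_le (by omega) hprim hcop hcong
      (by simpa [or_iff_not_imp_left, Prod.ext_iff] using ht)
  have hinj : Function.Injective Φ := Φ.injective_of_card_filter_eq_zero_lt fun t ht ↦
    (hzeros t ht).trans_lt (by simpa using hlt)
  refine ⟨LinearMap.range Φ, ?_, ?_, ?_, ?_⟩
  · ext v
    simp [hΦ, eq_comm]
  · rw [LinearMap.finrank_range_of_inj hinj, Module.finrank_prod, Module.finrank_prod,
      Module.finrank_self, Module.finrank_eq_of_card_eq_pow (hF ▸ hE)]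
  · rintro _ ⟨t, rfl⟩ ht
    have := hzeros t (by rintro rfl; exact ht (map_zero Φ))
    rw [hammingNorm_eq_card_sub_card_filter_eq_zero, Fintype.card_fin, Nat.mul_sub_one_sub_two]
    omega
  · refine ⟨Φ (-1, 1, 0), LinearMap.mem_range_self Φ _, ?_⟩
    rw [hammingNorm_eq_card_sub_card_filter_eq_zero, Fintype.card_fin, hΦ,
      card_filter_codeword_neg_one_one_zero (by omega) hprim hcop hcong, Nat.mul_sub_one_sub_two]

/-- Under the stated hypotheses, the code
`C = {(a·γ^{(q+1)ie₁} + b·γ^{(q+1)ie₂} + Tr_{E/F}(c·γ^{ie₃}))_i : a, b ∈ F_q, c ∈ F_{q²}}`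
is an `F_q`-linear code of length `q²-1`, dimension `4`, and minimum Hamming distance
`q(q-1)-2`. -/
theorem code_is_linear_dim4_mindist (q : ℕ) (hq : 2 < q)
    (hppow : ∃ (p n : ℕ), p.Prime ∧ 0 < n ∧ q = p ^ n)
    (F E : Type) [Field F] [Fintype F] [DecidableEq F] [Field E] [Fintype E] [DecidableEq E]
    [Algebra F E] (hF : Fintype.card F = q) (hE : Fintype.card E = q ^ 2)
    (γ : E) (hγ : ∀ x : E, x ≠ 0 → ∃ n : ℕ, γ ^ n = x)
    (e₁ e₂ e₃ : ℤ) (he₃ : Int.gcd (q + 1) e₃ = 1)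
    (he₁₂ : Int.gcd (q - 1) (e₂ - e₁) = 1) (hcong : ((q : ℤ) - 1) ∣ (e₃ - (e₁ + e₂))) :
    ∃ S : Submodule F (Fin (q ^ 2 - 1) → E),
      (S : Set (Fin (q ^ 2 - 1) → E)) =
          {v | ∃ (a b : F) (c : E), v = codeword q F E γ e₁ e₂ e₃ a b c} ∧
        Module.finrank F S = 4 ∧
        (∀ v ∈ S, v ≠ 0 → q * (q - 1) - 2 ≤ hammingNorm v) ∧
        (∃ v ∈ S, hammingNorm v = q * (q - 1) - 2) :=
  code_is_linear_dim4_mindist_general q hq F E hF hE γ hγ e₁ e₂ e₃ he₃ he₁₂ hcong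
end

section
/- Let q be a prime power with q > 2. A linear code over F_q of length q^2-1 and dimension 4 with weights 0, q(q-1)-2, q(q-1)-1, q(q-1), q^2-2, q^2-1 occurring with frequencies 1, (q-1)^2(q^2-q-1), 2(q^2-1)(q-1), q^2-1, (q^2-1)(q-1), 2(q-1) respectively, has a dual code with no codewords of weight 1, 2, or 3, and exactly (q^2-3)(q-1)^2(q-2)^2(q+2)(q+1)/24 codewords of weight 4. -/
/-!
Pless power moments, obtained by double counting. For a set `T` of coordinates, the dual words
vanishing off `T` form the dual code of `C ⊔ {u | u = 0 on T}`, so counting dimensions gives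
`|C| · #{v ∈ C^⊥ | v = 0 off T} = q^|T| · #{u ∈ C | u = 0 on T}`. Summing over the `t`-sets `T`
gives `|C| · ∑_{v ∈ C^⊥} (n - wt v choose n - t) = q^t · ∑_{u ∈ C} (n - wt u choose t)`.
If `C^⊥` has no nonzero words of weight below `t`, the left side is `|C| · ((n choose t) + B_t)`,
where `B_t` counts the dual words of weight `t`. For the given weight distribution the right side
is `|C| · (n choose t)` for `t = 1, 2, 3`, so `B_1 = B_2 = B_3 = 0` in turn, and `t = 4`
computes `B_4`.
-/

open Module Finset

theorem sum_comp_eq_sum_card_filter_nsmul {α β M : Type*} [DecidableEq β] [AddCommMonoid M]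
    (s : Finset α) (W : Finset β) (g : α → β) (f : β → M)
    (hf : ∀ a ∈ s, g a ∉ W → f (g a) = 0) :
    ∑ a ∈ s, f (g a) = ∑ b ∈ W, #{a ∈ s | g a = b} • f b := by
  rw [← sum_filter_of_ne fun a ha h => by_contra fun hW => h (hf a ha hW),
    ← sum_fiberwise_of_maps_to (g := g) (t := W) fun a ha => (mem_filter.mp ha).2]
  refine sum_congr rfl fun b hb => ?_
  rw [filter_filter, sum_congr rfl fun a ha => by rw [(mem_filter.mp ha).2.2], sum_const]
  congr 2
  ext a
  simp only [mem_filter, and_congr_right_iff, and_iff_right_iff_imp]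
  rintro - rfl
  exact hb

theorem sum_powersetCard_compl {ι β : Type*} [Fintype ι] [DecidableEq ι] [AddCommMonoid β]
    (f : Finset ι → β) {t : ℕ} (ht : t ≤ Fintype.card ι) :
    ∑ T ∈ powersetCard (Fintype.card ι - t) univ, f T = ∑ T ∈ powersetCard t univ, f Tᶜ := by
  refine sum_nbij' (·ᶜ) (·ᶜ) ?_ ?_ (by simp) (by simp) (by simp)
  all_goals
    intro T hT
    simp only [mem_powersetCard_univ, card_compl] at hT ⊢
    omega

namespace LinearCode

variable {F ι : Type*} [Field F]

def vanishingOn (T : Set ι) : Submodule F (ι → F) :=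
  ⨅ i ∈ T, LinearMap.ker (LinearMap.proj i)

theorem mem_vanishingOn {T : Set ι} {v : ι → F} : v ∈ vanishingOn T ↔ ∀ i ∈ T, v i = 0 := by
  simp [vanishingOn, Submodule.mem_iInf]

variable [Fintype ι]

theorem card_filter_eq_zero_eq_card_sub_hammingNorm [DecidableEq F] (v : ι → F) :
    #{i | v i = 0} = Fintype.card ι - hammingNorm v := by
  have := card_filter_add_card_filter_not (s := univ) (fun i => v i = 0)
  rw [hammingNorm]
  simp only [card_univ, ne_eq] at this ⊢
  omega

theorem sum_card_filter_vanishing [DecidableEq F] (s : Finset (ι → F)) (m : ℕ) :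
    ∑ T ∈ powersetCard m univ, #{v ∈ s | ∀ i ∈ T, v i = 0} =
      ∑ v ∈ s, (Fintype.card ι - hammingNorm v).choose m := by
  simp_rw [card_filter]
  rw [sum_comm]
  refine sum_congr rfl fun v _ => ?_
  have : {T ∈ powersetCard m (univ : Finset ι) | ∀ i ∈ T, v i = 0} =
      powersetCard m ({i | v i = 0} : Finset ι) := by
    ext T
    simp [mem_powersetCard, subset_iff, and_comm]
  rw [← card_filter, this, card_powersetCard, card_filter_eq_zero_eq_card_sub_hammingNorm]

variable [DecidableEq ι]

theorem finrank_vanishingOn_add_card (T : Finset ι) :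
    finrank F (vanishingOn (F := F) (T : Set ι)) + #T = Fintype.card ι := by
  have e := LinearMap.iInfKerProjEquiv F (fun _ : ι => F) (I := (T : Set ι)ᶜ) (J := T)
    disjoint_compl_left (by simp)
  rw [vanishingOn, e.finrank_eq, finrank_fintype_fun_eq_card, Fintype.card_compl_set]
  simp only [Finset.coe_sort_coe, Fintype.card_coe]
  exact Nat.sub_add_cancel (card_le_univ T)

def dualCode (C : Submodule F (ι → F)) : Submodule F (ι → F) :=
  C.dualAnnihilator.comap (dotProductEquiv F ι).toLinearMap

theorem mem_dualCode {C : Submodule F (ι → F)} {v : ι → F} :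
    v ∈ dualCode C ↔ ∀ u ∈ C, v ⬝ᵥ u = 0 := by
  simp [dualCode]

theorem finrank_dualCode_add_finrank (C : Submodule F (ι → F)) :
    finrank F (dualCode C) + finrank F C = Fintype.card ι := by
  rw [dualCode, Submodule.comap_equiv_eq_map_symm, LinearEquiv.finrank_map_eq, add_comm,
    Subspace.finrank_add_finrank_dualAnnihilator_eq, finrank_fintype_fun_eq_card]

theorem dualCode_sup (C D : Submodule F (ι → F)) :
    dualCode (C ⊔ D) = dualCode C ⊓ dualCode D := by
  rw [dualCode, Submodule.dualAnnihilator_sup_eq, Submodule.comap_inf]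
  rfl

theorem dualCode_vanishingOn (T : Finset ι) :
    dualCode (vanishingOn (F := F) (T : Set ι)) = vanishingOn ((Tᶜ : Finset ι) : Set ι) := by
  ext v
  simp only [mem_dualCode, mem_vanishingOn, Finset.mem_coe, Finset.mem_compl]
  constructor
  · intro h i hi
    simpa using h (Pi.single i 1) fun j hj => Pi.single_eq_of_ne (by rintro rfl; exact hi hj) _
  · intro h u hu
    refine sum_eq_zero fun i _ => ?_
    by_cases hi : i ∈ T
    · simp [hu i hi]
    · simp [h i hi]

theorem finrank_dualCode_inf_vanishingOn_compl_add_finrank (C : Submodule F (ι → F))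
    (T : Finset ι) :
    finrank F ↥(dualCode C ⊓ vanishingOn ((Tᶜ : Finset ι) : Set ι)) + finrank F C =
      #T + finrank F ↥(C ⊓ vanishingOn (T : Set ι)) := by
  rw [← dualCode_vanishingOn, ← dualCode_sup]
  have h₁ := finrank_dualCode_add_finrank (C ⊔ vanishingOn (T : Set ι))
  have h₂ := Submodule.finrank_sup_add_finrank_inf_eq C (vanishingOn (F := F) (T : Set ι))
  have h₃ := finrank_vanishingOn_add_card (F := F) T
  omega

section Counting

open scoped Classical

variable [Fintype F]

theorem card_filter_mem_eq_pow_finrank (S : Submodule F (ι → F)) :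
    #{v | v ∈ S} = Fintype.card F ^ finrank F S := by
  rw [← Fintype.card_subtype, Module.card_eq_pow_finrank (K := F) (V := S)]

variable [DecidableEq F]

theorem card_pow_mul_card_dualCode_vanishing_compl (C : Submodule F (ι → F)) (T : Finset ι) :
    Fintype.card F ^ finrank F C * #{v | v ∈ dualCode C ∧ ∀ i ∈ Tᶜ, v i = 0} =
      Fintype.card F ^ #T * #{u | u ∈ C ∧ ∀ i ∈ T, u i = 0} := by
  have h (S : Submodule F (ι → F)) (Z : Finset ι) :
      #{v | v ∈ S ∧ ∀ i ∈ Z, v i = 0} =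
        Fintype.card F ^ finrank F ↥(S ⊓ vanishingOn (Z : Set ι)) := by
    rw [← card_filter_mem_eq_pow_finrank]
    simp [Submodule.mem_inf, mem_vanishingOn]
  rw [h, h, ← pow_add, ← pow_add, add_comm, finrank_dualCode_inf_vanishingOn_compl_add_finrank]

theorem pless_binomial_moment (C : Submodule F (ι → F)) {t : ℕ} (ht : t ≤ Fintype.card ι) :
    Fintype.card F ^ finrank F C *
        ∑ v with v ∈ dualCode C, (Fintype.card ι - hammingNorm v).choose (Fintype.card ι - t) =
      Fintype.card F ^ t * ∑ u with u ∈ C, (Fintype.card ι - hammingNorm u).choose t := by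
  rw [← sum_card_filter_vanishing, ← sum_card_filter_vanishing, sum_powersetCard_compl _ ht,
    mul_sum, mul_sum]
  refine sum_congr rfl fun T hT => ?_
  rw [filter_filter, filter_filter, ← mem_powersetCard_univ.mp hT]
  convert card_pow_mul_card_dualCode_vanishing_compl C T

theorem pless_binomial_moment_of_le_hammingNorm (C : Submodule F (ι → F)) {t : ℕ} (ht₀ : 0 < t)
    (ht : t ≤ Fintype.card ι) (hmin : ∀ v ∈ dualCode C, v ≠ 0 → t ≤ hammingNorm v) :
    Fintype.card F ^ finrank F C *
        ((Fintype.card ι).choose t + #{v | v ∈ dualCode C ∧ hammingNorm v = t}) =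
      Fintype.card F ^ t * ∑ u with u ∈ C, (Fintype.card ι - hammingNorm u).choose t := by
  rw [← pless_binomial_moment C ht]
  congr 1
  rw [sum_comp_eq_sum_card_filter_nsmul _ {0, t} hammingNorm
    (fun j => (Fintype.card ι - j).choose (Fintype.card ι - t)), sum_pair ht₀.ne]
  · have hzero : #{v | v ∈ dualCode C ∧ v = 0} = 1 :=
      card_eq_one.mpr ⟨0, by ext v; simp +contextual⟩
    simp [filter_filter, hammingNorm_eq_zero, Nat.choose_symm ht, hzero]
  · intro v hv hW
    simp only [mem_insert, mem_singleton, not_or] at hW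
    have := hmin v (mem_filter.mp hv).2 (hammingNorm_ne_zero_iff.mp hW.1)
    have : hammingNorm v ≤ Fintype.card ι := hammingNorm_le_card_fintype
    exact Nat.choose_eq_zero_of_lt (by omega)

theorem succ_le_hammingNorm_of_mem_dualCode (C : Submodule F (ι → F)) {t : ℕ} (ht₀ : 0 < t)
    (ht : t ≤ Fintype.card ι) (hmin : ∀ v ∈ dualCode C, v ≠ 0 → t ≤ hammingNorm v)
    (hmoment : Fintype.card F ^ t * ∑ u with u ∈ C, (Fintype.card ι - hammingNorm u).choose t =
      Fintype.card F ^ finrank F C * (Fintype.card ι).choose t) :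
    ∀ v ∈ dualCode C, v ≠ 0 → t + 1 ≤ hammingNorm v := by
  have h := pless_binomial_moment_of_le_hammingNorm C ht₀ ht hmin
  rw [hmoment, mul_add, add_eq_left, mul_eq_zero, card_eq_zero, filter_eq_empty_iff] at h
  intro v hv hv₀
  refine lt_of_le_of_ne (hmin v hv hv₀) fun heq => ?_
  obtain h | h := h
  · exact absurd h (pow_ne_zero _ Fintype.card_ne_zero)
  · exact h (mem_univ v) ⟨hv, heq.symm⟩

theorem sum_hammingNorm_eq_sum_ncard {M : Type*} [AddCommMonoid M] (C : Submodule F (ι → F))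
    (W : Finset ℕ) (hW : ∀ u ∈ C, hammingNorm u ∈ W) (f : ℕ → M) :
    ∑ u with u ∈ C, f (hammingNorm u) =
      ∑ w ∈ W, Set.ncard {u : ι → F | u ∈ C ∧ hammingNorm u = w} • f w := by
  rw [sum_comp_eq_sum_card_filter_nsmul _ W hammingNorm f
    fun u hu hu' => absurd (hW u (mem_filter.mp hu).2) hu']
  refine sum_congr rfl fun w _ => ?_
  rw [filter_filter, Set.ncard_eq_toFinset_card', Set.toFinset_ofPred]

end Counting

end LinearCode

/-- The value of `∑_{u ∈ C} (q² - 1 - wt u choose t)` for the weight distribution of the theorem: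
the weights `0, q(q-1)-2, q(q-1)-1, q(q-1), q²-2, q²-1` leave `q²-1, q+1, q, q-1, 1, 0` zero
coordinates. -/
def codeBinomialMoment (q t : ℕ) : ℕ :=
  (q ^ 2 - 1).choose t + (q - 1) ^ 2 * (q ^ 2 - q - 1) * (q + 1).choose t +
    2 * (q ^ 2 - 1) * (q - 1) * q.choose t + (q ^ 2 - 1) * (q - 1).choose t +
    (q ^ 2 - 1) * (q - 1) * Nat.choose 1 t + 2 * (q - 1) * Nat.choose 0 t

theorem pow_mul_codeBinomialMoment {q t : ℕ} (hq : 2 < q) (ht₀ : 0 < t) (ht : t < 4) :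
    q ^ t * codeBinomialMoment q t = q ^ 4 * (q ^ 2 - 1).choose t := by
  have h₁ : 1 ≤ q := by omega
  have h₂ : q + 1 ≤ q ^ 2 := by nlinarith
  have h₃ : 1 ≤ q ^ 2 := by nlinarith
  rw [← Nat.cast_inj (R := ℚ)]
  interval_cases t <;>
  · simp only [codeBinomialMoment, Nat.cast_mul, Nat.cast_add, Nat.cast_pow,
      Nat.cast_choose_eq_descPochhammer_div, descPochhammer_eval_eq_prod_range]
    push_cast [Nat.cast_sub h₁, Nat.cast_sub h₂, Nat.cast_sub h₃, Nat.sub_sub, prod_range_succ,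
      Nat.factorial]
    ring

theorem codeBinomialMoment_four {q : ℕ} (hq : 2 < q) :
    codeBinomialMoment q 4 * 24 =
      (q ^ 2 - 1).choose 4 * 24 + (q ^ 2 - 3) * (q - 1) ^ 2 * (q - 2) ^ 2 * (q + 2) * (q + 1) := by
  have h₁ : 2 ≤ q := by omega
  have h₂ : q + 1 ≤ q ^ 2 := by nlinarith
  have h₃ : 3 ≤ q ^ 2 := by nlinarith
  rw [← Nat.cast_inj (R := ℚ)]
  simp only [codeBinomialMoment, Nat.cast_mul, Nat.cast_add, Nat.cast_pow,
    Nat.cast_choose_eq_descPochhammer_div, descPochhammer_eval_eq_prod_range]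
  push_cast [Nat.cast_sub h₁, Nat.cast_sub (by omega : 1 ≤ q), Nat.cast_sub h₂, Nat.cast_sub h₃,
    Nat.cast_sub (by omega : 1 ≤ q ^ 2), Nat.sub_sub, prod_range_succ, Nat.factorial]
  ring

theorem sum_nsmul_choose_eq_codeBinomialMoment {q : ℕ} (hq : 2 < q) (A : ℕ → ℕ) (h0 : A 0 = 1)
    (h1 : A (q * (q - 1) - 2) = (q - 1) ^ 2 * (q ^ 2 - q - 1))
    (h2 : A (q * (q - 1) - 1) = 2 * (q ^ 2 - 1) * (q - 1)) (h3 : A (q * (q - 1)) = q ^ 2 - 1)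
    (h4 : A (q ^ 2 - 2) = (q ^ 2 - 1) * (q - 1)) (h5 : A (q ^ 2 - 1) = 2 * (q - 1)) (t : ℕ) :
    ∑ w ∈ {0, q * (q - 1) - 2, q * (q - 1) - 1, q * (q - 1), q ^ 2 - 2, q ^ 2 - 1},
      A w • (q ^ 2 - 1 - w).choose t = codeBinomialMoment q t := by
  have hq₂ : q * (q - 1) + q = q ^ 2 := by
    rw [mul_tsub, mul_one, sq, Nat.sub_add_cancel (Nat.le_mul_self q)]
  have hq₃ : 6 ≤ q * (q - 1) := Nat.mul_le_mul (by omega : 3 ≤ q) (by omega : 2 ≤ q - 1)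
  repeat rw [sum_insert (by simp only [mem_insert, mem_singleton]; omega)]
  have e₁ : q ^ 2 - 1 - (q * (q - 1) - 2) = q + 1 := by omega
  have e₂ : q ^ 2 - 1 - (q * (q - 1) - 1) = q := by omega
  have e₃ : q ^ 2 - 1 - q * (q - 1) = q - 1 := by omega
  have e₄ : q ^ 2 - 1 - (q ^ 2 - 2) = 1 := by omega
  simp only [sum_singleton, h0, h1, h2, h3, h4, h5, smul_eq_mul, Nat.sub_zero, e₁, e₂, e₃, e₄,
    Nat.sub_self, codeBinomialMoment]
  ring

open LinearCode

theorem dual_code_weights_general (q : ℕ) (hq : 2 < q)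
    (F : Type) [Field F] [Fintype F] [DecidableEq F] (hF : Fintype.card F = q)
    (C : Submodule F (Fin (q ^ 2 - 1) → F)) (hdim : Module.finrank F C = 4)
    (h0 : Set.ncard {v : Fin (q ^ 2 - 1) → F | v ∈ C ∧ hammingNorm v = 0} = 1)
    (h1 : Set.ncard {v : Fin (q ^ 2 - 1) → F | v ∈ C ∧ hammingNorm v = q * (q - 1) - 2} =
      (q - 1) ^ 2 * (q ^ 2 - q - 1))
    (h2 : Set.ncard {v : Fin (q ^ 2 - 1) → F | v ∈ C ∧ hammingNorm v = q * (q - 1) - 1} =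
      2 * (q ^ 2 - 1) * (q - 1))
    (h3 : Set.ncard {v : Fin (q ^ 2 - 1) → F | v ∈ C ∧ hammingNorm v = q * (q - 1)} =
      q ^ 2 - 1)
    (h4 : Set.ncard {v : Fin (q ^ 2 - 1) → F | v ∈ C ∧ hammingNorm v = q ^ 2 - 2} =
      (q ^ 2 - 1) * (q - 1))
    (h5 : Set.ncard {v : Fin (q ^ 2 - 1) → F | v ∈ C ∧ hammingNorm v = q ^ 2 - 1} =
      2 * (q - 1))
    (honly : ∀ v ∈ C, hammingNorm v ∈
      ({0, q * (q - 1) - 2, q * (q - 1) - 1, q * (q - 1), q ^ 2 - 2, q ^ 2 - 1} : Set ℕ)) :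
    (∀ v : Fin (q ^ 2 - 1) → F, (∀ u ∈ C, ∑ i, v i * u i = 0) →
        hammingNorm v ≠ 1 ∧ hammingNorm v ≠ 2 ∧ hammingNorm v ≠ 3) ∧
      Set.ncard {v : Fin (q ^ 2 - 1) → F |
          (∀ u ∈ C, ∑ i, v i * u i = 0) ∧ hammingNorm v = 4} * 24 =
        (q ^ 2 - 3) * (q - 1) ^ 2 * (q - 2) ^ 2 * (q + 2) * (q + 1) := by
  classical
  have hn : Fintype.card (Fin (q ^ 2 - 1)) = q ^ 2 - 1 := Fintype.card_fin _
  have hlen : 4 ≤ q ^ 2 - 1 := by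
    have : 9 ≤ q ^ 2 := by nlinarith
    omega
  have hcode (t : ℕ) :
      ∑ u with u ∈ C, (q ^ 2 - 1 - hammingNorm u).choose t = codeBinomialMoment q t :=
    (sum_hammingNorm_eq_sum_ncard C _ (fun u hu => by simpa using honly u hu)
      fun w => (q ^ 2 - 1 - w).choose t).trans
      (sum_nsmul_choose_eq_codeBinomialMoment hq _ h0 h1 h2 h3 h4 h5 t)
  have hstep {t : ℕ} (ht₀ : 0 < t) (ht : t < 4)
      (hmin : ∀ v ∈ dualCode C, v ≠ 0 → t ≤ hammingNorm v) :
      ∀ v ∈ dualCode C, v ≠ 0 → t + 1 ≤ hammingNorm v :=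
    succ_le_hammingNorm_of_mem_dualCode C ht₀ (by rw [hn]; omega) hmin
      (by rw [hF, hdim, hn, hcode, pow_mul_codeBinomialMoment hq ht₀ ht])
  have hmin₄ : ∀ v ∈ dualCode C, v ≠ 0 → 4 ≤ hammingNorm v :=
    hstep (by norm_num) (by norm_num) <| hstep (by norm_num) (by norm_num) <|
      hstep (by norm_num) (by norm_num) fun v _ hv => hammingNorm_pos_iff.mpr hv
  refine ⟨fun v hv => ?_, ?_⟩
  · obtain rfl | hv₀ := eq_or_ne v 0
    · simp
    · have := hmin₄ v (mem_dualCode.mpr hv) hv₀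
      omega
  · have h := pless_binomial_moment_of_le_hammingNorm C (t := 4) (by norm_num)
      (by rw [hn]; omega) hmin₄
    rw [hF, hdim, hn, hcode, Nat.mul_left_cancel_iff (by positivity)] at h
    simp only [mem_dualCode, dotProduct] at h
    rw [Set.ncard_eq_toFinset_card', Set.toFinset_ofPred]
    linarith [codeBinomialMoment_four hq]

/-- Let `C` be a linear code over `F_q` (`q > 2`) of length `q²-1`, dimension `4`, whose
weights `0, q(q-1)-2, q(q-1)-1, q(q-1), q²-2, q²-1` occur with frequencies
`1, (q-1)²(q²-q-1), 2(q²-1)(q-1), q²-1, (q²-1)(q-1), 2(q-1)`.  Then its dual code has no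
codewords of weight `1`, `2` or `3`, and exactly `(q²-3)(q-1)²(q-2)²(q+2)(q+1)/24`
codewords of weight `4`. -/
theorem dual_code_weights (q : ℕ) (hq : 2 < q)
    (hppow : ∃ (p n : ℕ), p.Prime ∧ 0 < n ∧ q = p ^ n)
    (F : Type) [Field F] [Fintype F] [DecidableEq F] (hF : Fintype.card F = q)
    (C : Submodule F (Fin (q ^ 2 - 1) → F)) (hdim : Module.finrank F C = 4)
    (h0 : Set.ncard {v : Fin (q ^ 2 - 1) → F | v ∈ C ∧ hammingNorm v = 0} = 1)
    (h1 : Set.ncard {v : Fin (q ^ 2 - 1) → F | v ∈ C ∧ hammingNorm v = q * (q - 1) - 2} =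
      (q - 1) ^ 2 * (q ^ 2 - q - 1))
    (h2 : Set.ncard {v : Fin (q ^ 2 - 1) → F | v ∈ C ∧ hammingNorm v = q * (q - 1) - 1} =
      2 * (q ^ 2 - 1) * (q - 1))
    (h3 : Set.ncard {v : Fin (q ^ 2 - 1) → F | v ∈ C ∧ hammingNorm v = q * (q - 1)} =
      q ^ 2 - 1)
    (h4 : Set.ncard {v : Fin (q ^ 2 - 1) → F | v ∈ C ∧ hammingNorm v = q ^ 2 - 2} =
      (q ^ 2 - 1) * (q - 1))
    (h5 : Set.ncard {v : Fin (q ^ 2 - 1) → F | v ∈ C ∧ hammingNorm v = q ^ 2 - 1} =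
      2 * (q - 1))
    (honly : ∀ v ∈ C, hammingNorm v ∈
      ({0, q * (q - 1) - 2, q * (q - 1) - 1, q * (q - 1), q ^ 2 - 2, q ^ 2 - 1} : Set ℕ)) :
    (∀ v : Fin (q ^ 2 - 1) → F, (∀ u ∈ C, ∑ i, v i * u i = 0) →
        hammingNorm v ≠ 1 ∧ hammingNorm v ≠ 2 ∧ hammingNorm v ≠ 3) ∧
      Set.ncard {v : Fin (q ^ 2 - 1) → F |
          (∀ u ∈ C, ∑ i, v i * u i = 0) ∧ hammingNorm v = 4} * 24 =
        (q ^ 2 - 3) * (q - 1) ^ 2 * (q - 2) ^ 2 * (q + 2) * (q + 1) :=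
  dual_code_weights_general q hq F hF C hdim h0 h1 h2 h3 h4 h5 honly
end

section
/- Let q be a prime power, γ a primitive element of F_{q^2}, and e_2, e_3 integers with gcd(e_3, q^2-1) = 1 and e_3 ≡ e_2 (mod q-1). Then the code C = { (b γ^{(q+1)i e_2} + Tr_{F_{q^2}/F_q}(c γ^{i e_3}))_{i=0}^{q^2-2} : b ∈ F_q, c ∈ F_{q^2} } is a [q^2-1, 3, q(q-1)-1] linear code over F_q with weight enumerator 1 + (q^2-1)(q-1) z^{q(q-1)-1} + (q^2-1) z^{q(q-1)} + (q-1) z^{q^2-1}. -/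
/-- The codeword of `C_{((q+1)e₂,e₃)}` associated with `(b,c) ∈ F_q × F_{q²}`:
`(b·γ^{(q+1)ie₂} + Tr_{E/F}(c·γ^{ie₃}))_{i=0}^{q²-2}`, where `Tr_{E/F}(x) = x + x^q`. -/
def codeword3 (q : ℕ) (F E : Type) [Field F] [Field E] [Algebra F E]
    (γ : E) (e₂ e₃ : ℤ) (b : F) (c : E) : Fin (q ^ 2 - 1) → E := fun i =>
  algebraMap F E b * γ ^ (((q : ℤ) + 1) * i * e₂) +
    (c * γ ^ ((i : ℤ) * e₃) + (c * γ ^ ((i : ℤ) * e₃)) ^ q)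

open Finset

lemma card_roots_le (E : Type) [Field E] [Fintype E] [DecidableEq E]
    (pol : Polynomial E) (hpol : pol ≠ 0) :
    #{y : E | Polynomial.eval y pol = 0} ≤ pol.natDegree := by
  classical
  calc #{y : E | Polynomial.eval y pol = 0} ≤ pol.roots.toFinset.card := by
        apply Finset.card_le_card
        intro y hy
        simp only [Finset.mem_filter, Finset.mem_univ, true_and] at hy
        simp [Polynomial.mem_roots, hpol, hy, Polynomial.IsRoot]
    _ ≤ Multiset.card pol.roots := pol.roots.toFinset_card_le
    _ ≤ pol.natDegree := pol.card_roots'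

lemma charP_of_card (E : Type) [Field E] [Fintype E] (p m : ℕ) (hp : p.Prime)
    (hE : Fintype.card E = p ^ m) (hm : 0 < m) : CharP E p := by
  obtain ⟨r, hr⟩ := CharP.exists E
  have hrprime : r.Prime := (CharP.char_is_prime E r)
  obtain ⟨k, hkp, hcard⟩ := FiniteField.card E r
  have : r ∣ p ^ m := by
    rw [← hE, hcard]; exact dvd_pow_self r (by positivity)
  have : r = p := ((Nat.prime_dvd_prime_iff_eq hrprime hp).mp (hrprime.dvd_of_dvd_pow this))
  rwa [← this]

lemma trace_ker_card (E : Type) [Field E] [Fintype E] [DecidableEq E] (p n : ℕ)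
    (hp : p.Prime) (hn : 0 < n) (hE : Fintype.card E = (p ^ n) ^ 2) :
    #{y : E | y + y ^ (p ^ n) = 0} = p ^ n := by
  classical
  set q := p ^ n with hq
  have hq1 : 1 < q := Nat.one_lt_pow hn.ne' hp.one_lt
  have hchar : CharP E p := charP_of_card E p (2 * n) hp (by rw [hE, ← pow_mul, mul_comm]) (by omega)
  have hfact : Fact p.Prime := ⟨hp⟩
  have hadd : ∀ x y : E, (x + y) ^ q = x ^ q + y ^ q := fun x y => add_pow_char_pow x y p n
  let T : E →+ E := AddMonoidHom.mk' (fun y => y + y ^ q) (fun x y => by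
    rw [hadd]; ring)
  have hcoeff : ∀ c : E, (Polynomial.X ^ q + Polynomial.C c * Polynomial.X : Polynomial E) ≠ 0 := by
    intro c h0
    have := congrArg (fun P : Polynomial E => Polynomial.coeff P q) h0
    simp only [Polynomial.coeff_add, Polynomial.coeff_X_pow, if_pos rfl, Polynomial.coeff_C_mul,
      Polynomial.coeff_X, Polynomial.coeff_zero] at this
    rw [if_neg (by omega : ¬ (1 = q)), mul_zero, add_zero] at this
    exact one_ne_zero this
  have hdeg : ∀ c : E, (Polynomial.X ^ q + Polynomial.C c * Polynomial.X : Polynomial E).natDegree = q := by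
    intro c
    compute_degree!
    · rw [if_neg (by omega : ¬ q = 1), add_zero]; exact one_ne_zero
    all_goals exact hq1.le
  have hfix : #{z : E | z ^ q = z} ≤ q := by
    have h := card_roots_le E (Polynomial.X ^ q + Polynomial.C (-1) * Polynomial.X) (hcoeff _)
    rw [hdeg] at h
    calc #{z : E | z ^ q = z} ≤ _ := ?_
        _ ≤ q := h
    apply Finset.card_le_card
    intro z hz
    simp only [Finset.mem_filter, Finset.mem_univ, true_and] at hz ⊢
    simp only [Polynomial.eval_add, Polynomial.eval_pow, Polynomial.eval_X,
      Polynomial.eval_mul, Polynomial.eval_C, hz]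
    ring
  have hker : #{y : E | y + y ^ q = 0} ≤ q := by
    have h := card_roots_le E (Polynomial.X ^ q + Polynomial.C 1 * Polynomial.X) (hcoeff _)
    rw [hdeg] at h
    calc #{y : E | y + y ^ q = 0} ≤ _ := ?_
        _ ≤ q := h
    apply Finset.card_le_card
    intro z hz
    simp only [Finset.mem_filter, Finset.mem_univ, true_and] at hz ⊢
    simp only [Polynomial.eval_add, Polynomial.eval_pow, Polynomial.eval_X,
      Polynomial.eval_mul, Polynomial.eval_C]
    linear_combination hz
  have hpowE : ∀ y : E, (y ^ q) ^ q = y := by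
    intro y
    rw [← pow_mul, ← pow_two q, ← hE]
    exact FiniteField.pow_card y
  have hrange_le : Nat.card (AddMonoidHom.range T) ≤ q := by
    have hmem : ∀ z : AddMonoidHom.range T, (z : E) ^ q = z := by
      rintro ⟨z, y, rfl⟩
      show (y + y ^ q) ^ q = y + y ^ q
      rw [hadd, hpowE]
      ring
    have hinj : Fintype.card (AddMonoidHom.range T) ≤ Fintype.card {z : E // z ^ q = z} := by
      refine Fintype.card_le_of_injective (fun z => ⟨z.1, hmem z⟩) ?_
      intro a b hab
      have := congrArg Subtype.val hab
      exact Subtype.ext this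
    rw [Nat.card_eq_fintype_card]
    calc Fintype.card (AddMonoidHom.range T) ≤ Fintype.card {z : E // z ^ q = z} := hinj
      _ = #{z : E | z ^ q = z} := Fintype.card_subtype _
      _ ≤ q := hfix
  have hker_eq : Nat.card (AddMonoidHom.ker T) = #{y : E | y + y ^ q = 0} := by
    rw [Nat.card_eq_fintype_card, Fintype.card_subtype]
    apply Finset.card_bij (fun a _ => a) <;> simp [AddMonoidHom.mem_ker, T]
  have hprod : Nat.card (AddMonoidHom.ker T) * Nat.card (AddMonoidHom.range T) = q ^ 2 := by
    have h1 := AddSubgroup.card_eq_card_quotient_mul_card_addSubgroup (AddMonoidHom.ker T)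
    have h2 : Nat.card (E ⧸ AddMonoidHom.ker T) = Nat.card (AddMonoidHom.range T) :=
      Nat.card_congr (QuotientAddGroup.quotientKerEquivRange T).toEquiv
    rw [h2] at h1
    rw [mul_comm, ← h1, Nat.card_eq_fintype_card, hE]
  have hq0 : 0 < q := by omega
  have hge : q ≤ Nat.card (AddMonoidHom.ker T) := by
    by_contra hlt
    push_neg at hlt
    have : Nat.card (AddMonoidHom.ker T) * Nat.card (AddMonoidHom.range T) < q * q := by
      calc Nat.card (AddMonoidHom.ker T) * Nat.card (AddMonoidHom.range T)
          ≤ Nat.card (AddMonoidHom.ker T) * q := Nat.mul_le_mul_left _ hrange_le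
        _ < q * q := by
            apply Nat.mul_lt_mul_of_lt_of_le hlt (le_refl q) hq0
    rw [hprod, pow_two] at this
    omega
  rw [← hker_eq]
  omega

lemma pow_fiber_card (E : Type) [Field E] [Fintype E] [DecidableEq E] (m : ℕ) (hm : 0 < m)
    (ζ : E) (h : IsPrimitiveRoot ζ m) (d : E) (hd : d ≠ 0) :
    #{y : E | y ^ m = d ^ m} = m := by
  have hnodup := h.nthRoots_nodup (a := d ^ m) (pow_ne_zero _ hd)
  have hcard := h.card_nthRoots (d ^ m)
  rw [if_pos ⟨d, rfl⟩] at hcard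
  have hset : ({y : E | y ^ m = d ^ m} : Finset E) = (Polynomial.nthRoots m (d ^ m)).toFinset := by
    ext y
    simp [Polynomial.mem_nthRoots hm]
  rw [hset, Multiset.toFinset_card_eq_card_iff_nodup.mpr hnodup, hcard]

lemma zero_count (q : ℕ) (F E : Type) [Field F] [Fintype F] [DecidableEq F] [Field E] [Fintype E]
    [DecidableEq E] [Algebra F E]
    (p n : ℕ) (hp : p.Prime) (hn : 0 < n) (hqpn : q = p ^ n)
    (hF : Fintype.card F = q) (hE : Fintype.card E = q ^ 2)
    (ζ : E) (hζ : IsPrimitiveRoot ζ (q + 1)) (b : F) (c : E) :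
    #{x : E | x ≠ 0 ∧ algebraMap F E b * x ^ (q + 1) + (c * x + (c * x) ^ q) = 0} =
      if b = 0 ∧ c = 0 then q ^ 2 - 1 else if b = 0 then q - 1 else if c = 0 then 0 else q := by
  classical
  have hq1 : 1 < q := by rw [hqpn]; exact Nat.one_lt_pow hn.ne' hp.one_lt
  have hfq : ∀ y : E, y ^ q ^ 2 = y := by intro y; rw [← hE]; exact FiniteField.pow_card y
  have hfq2 : ∀ y : E, (y ^ q) ^ q = y := by intro y; rw [← pow_mul, ← pow_two]; exact hfq y
  have halg : ∀ a : F, (algebraMap F E a) ^ q = algebraMap F E a := by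
    intro a
    rw [← map_pow, ← hF, FiniteField.pow_card]
  by_cases hb : b = 0
  · by_cases hc : c = 0
    · rw [if_pos ⟨hb, hc⟩]
      subst hb hc
      have : ∀ x : E, (x ≠ 0 ∧ algebraMap F E 0 * x ^ (q + 1) + ((0:E) * x + ((0:E) * x) ^ q) = 0)
          ↔ x ≠ 0 := by
        intro x
        simp [zero_pow (by omega : q ≠ 0)]
      rw [Finset.filter_congr (fun x _ => this x)]
      rw [Finset.filter_ne' univ 0, Finset.card_erase_of_mem (mem_univ 0), Finset.card_univ, hE]
    · rw [if_neg (by tauto), if_pos hb]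
      subst hb
      have hcond : ∀ x : E, (x ≠ 0 ∧ algebraMap F E 0 * x ^ (q + 1) + (c * x + (c * x) ^ q) = 0)
          ↔ (x ≠ 0 ∧ c * x + (c * x) ^ q = 0) := by
        intro x; simp
      rw [Finset.filter_congr (fun x _ => hcond x)]
      have hbij : #{x : E | x ≠ 0 ∧ c * x + (c * x) ^ q = 0}
          = #{y : E | y ≠ 0 ∧ y + y ^ q = 0} := by
        apply Finset.card_nbij (fun x => c * x)
        · intro x hx
          simp only [Finset.mem_filter, Finset.mem_univ, true_and, Finset.mem_coe] at hx ⊢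
          exact ⟨mul_ne_zero hc hx.1, hx.2⟩
        · intro x _ y _ hxy
          exact mul_left_cancel₀ hc hxy
        · intro y hy
          simp only [Finset.coe_filter, Finset.mem_univ, true_and, Set.mem_setOf_eq,
            Set.mem_image] at hy ⊢
          refine ⟨c⁻¹ * y, ⟨?_, ?_⟩, by field_simp⟩
          · exact mul_ne_zero (inv_ne_zero hc) hy.1
          · rw [show c * (c⁻¹ * y) = y by field_simp]; exact hy.2
      rw [hbij]
      have h0 : ({y : E | y ≠ 0 ∧ y + y ^ q = 0} : Finset E)
          = ({y : E | y + y ^ q = 0} : Finset E).erase 0 := by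
        ext y
        simp only [Finset.mem_filter, Finset.mem_univ, true_and, Finset.mem_erase]
        try tauto
      have hmem0 : (0:E) ∈ ({y : E | y + y ^ q = 0} : Finset E) := by
        simp [zero_pow (by omega : q ≠ 0)]
      rw [h0, Finset.card_erase_of_mem hmem0]
      have ht := trace_ker_card E p n hp hn (by rw [← hqpn]; exact hE)
      rw [← hqpn] at ht
      rw [ht]
  · rw [if_neg (by tauto), if_neg hb]
    have hβ : algebraMap F E b ≠ 0 := by
      simpa using (map_ne_zero (algebraMap F E)).mpr hb
    by_cases hc : c = 0
    · rw [if_pos hc]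
      subst hc
      rw [Finset.card_eq_zero, Finset.filter_eq_empty_iff]
      intro x _
      rintro ⟨hx0, hx⟩
      simp only [zero_mul, zero_pow (by omega : q ≠ 0), add_zero] at hx
      exact (mul_ne_zero hβ (pow_ne_zero _ hx0)) hx
    · rw [if_neg hc]
      set β := algebraMap F E b with hβdef
      have hβq : β ^ q = β := halg b
      obtain ⟨d, hdne, hcd⟩ : ∃ d : E, d ≠ 0 ∧ c = β * d :=
        ⟨c * β⁻¹, mul_ne_zero hc (inv_ne_zero hβ), by field_simp⟩
      have hcq : c ^ q = β * d ^ q := by rw [hcd, mul_pow, hβq]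
      have hchar : CharP E p := by
        refine charP_of_card E p (2 * n) hp ?_ (by omega)
        rw [hE, hqpn, ← pow_mul, mul_comm]
      have : Fact p.Prime := ⟨hp⟩
      have hexp : ∀ x : E, (x + d ^ q) ^ (q + 1) = (x ^ q + d) * (x + d ^ q) := by
        intro x
        rw [pow_succ]
        congr 1
        have hfrob := add_pow_char_pow (R := E) x (d ^ q) p n
        rw [← hqpn] at hfrob
        rw [hfrob, hfq2]
      have hiden : ∀ x : E, β * ((x ^ q + d) * (x + d ^ q) - d ^ (q + 1))
          = β * x ^ (q + 1) + (c * x + (c * x) ^ q) := by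
        intro x
        rw [mul_pow, hcq, hcd, pow_succ, pow_succ]
        ring
      have key : ∀ x : E, (β * x ^ (q + 1) + (c * x + (c * x) ^ q) = 0)
          ↔ ((x + d ^ q) ^ (q + 1) = d ^ (q + 1)) := by
        intro x
        rw [← hiden x, mul_eq_zero, or_iff_right hβ, sub_eq_zero, hexp x]
      have hcond : ∀ x : E, (x ≠ 0 ∧ β * x ^ (q + 1) + (c * x + (c * x) ^ q) = 0)
          ↔ (x ≠ 0 ∧ (x + d ^ q) ^ (q + 1) = d ^ (q + 1)) := fun x => and_congr_right fun _ => key x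
      rw [Finset.filter_congr (fun x _ => hcond x)]
      have hbij : #{x : E | (x + d ^ q) ^ (q + 1) = d ^ (q + 1)}
          = #{y : E | y ^ (q + 1) = d ^ (q + 1)} := by
        apply Finset.card_nbij (fun x => x + d ^ q)
        · intro x hx
          simp only [Finset.mem_filter, Finset.mem_univ, true_and, Finset.mem_coe] at hx ⊢
          exact hx
        · intro x _ y _ hxy
          exact add_right_cancel hxy
        · intro y hy
          simp only [Finset.coe_filter, Finset.mem_univ, true_and, Set.mem_setOf_eq,
            Set.mem_image] at hy ⊢
          exact ⟨y - d ^ q, by rwa [sub_add_cancel], by rw [sub_add_cancel]⟩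
      have hfiber : #{y : E | y ^ (q + 1) = d ^ (q + 1)} = q + 1 :=
        pow_fiber_card E (q + 1) (by omega) ζ hζ d hdne
      have hdfix : (d ^ (q + 1)) ^ q = d ^ (q + 1) := by
        rw [← pow_mul, show (q + 1) * q = q ^ 2 + q by ring, pow_add, hfq, ← pow_succ']
      have hmem0 : (0:E) ∈ ({x : E | (x + d ^ q) ^ (q + 1) = d ^ (q + 1)} : Finset E) := by
        simp only [Finset.mem_filter, Finset.mem_univ, true_and, zero_add]
        rw [← pow_mul, mul_comm, pow_mul]
        exact hdfix
      have h0 : ({x : E | x ≠ 0 ∧ (x + d ^ q) ^ (q + 1) = d ^ (q + 1)} : Finset E)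
          = ({x : E | (x + d ^ q) ^ (q + 1) = d ^ (q + 1)} : Finset E).erase 0 := by
        ext x
        simp only [Finset.mem_filter, Finset.mem_univ, true_and, Finset.mem_erase]
        try tauto
      rw [h0, Finset.card_erase_of_mem hmem0, hbij, hfiber]
      omega

lemma gamma_ne_zero (q : ℕ) (hq1 : 1 < q) (E : Type) [Field E] [Fintype E] [DecidableEq E]
    (hE : Fintype.card E = q ^ 2)
    (γ : E) (hγ : ∀ x : E, x ≠ 0 → ∃ n : ℕ, γ ^ n = x) : γ ≠ 0 := by
  have hq2 : 4 ≤ q ^ 2 := by nlinarith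
  intro hzero
  have hall : ∀ x : E, x = 0 ∨ x = 1 := by
    intro x
    by_cases hx : x = 0
    · exact Or.inl hx
    · obtain ⟨m, hm⟩ := hγ x hx
      rw [hzero] at hm
      rcases Nat.eq_zero_or_pos m with h | h
      · right; rw [← hm, h, pow_zero]
      · exact absurd (hm.symm.trans (zero_pow h.ne')) hx
  have hle : Fintype.card E ≤ 2 := by
    have hsub : (Finset.univ : Finset E) ⊆ {0, 1} := fun x _ => by
      rcases hall x with h | h <;> simp [h]
    calc Fintype.card E = #(univ : Finset E) := rfl
      _ ≤ #({0, 1} : Finset E) := Finset.card_le_card hsub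
      _ ≤ 2 := (Finset.card_insert_le _ _).trans (by simp)
  omega

lemma gen_order (q : ℕ) (hq1 : 1 < q) (E : Type) [Field E] [Fintype E] [DecidableEq E]
    (hE : Fintype.card E = q ^ 2)
    (γ : E) (hγ : ∀ x : E, x ≠ 0 → ∃ n : ℕ, γ ^ n = x) (hγ0 : γ ≠ 0) :
    orderOf (Units.mk0 γ hγ0) = q ^ 2 - 1 := by
  have hgen : ∀ u : Eˣ, u ∈ Subgroup.zpowers (Units.mk0 γ hγ0) := by
    intro u
    obtain ⟨m, hm⟩ := hγ (u : E) (Units.ne_zero u)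
    exact ⟨(m : ℤ), by ext; push_cast [zpow_natCast]; simp [hm]⟩
  rw [orderOf_eq_card_of_forall_mem_zpowers hgen, Nat.card_eq_fintype_card,
    Fintype.card_units, hE]

lemma exists_primroot (q : ℕ) (hq1 : 1 < q) (E : Type) [Field E] [Fintype E] [DecidableEq E]
    (hE : Fintype.card E = q ^ 2)
    (γ : E) (hγ : ∀ x : E, x ≠ 0 → ∃ n : ℕ, γ ^ n = x) :
    ∃ ζ : E, IsPrimitiveRoot ζ (q + 1) := by
  have hγ0 : γ ≠ 0 := gamma_ne_zero q hq1 E hE γ hγ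
  set g : Eˣ := Units.mk0 γ hγ0 with hg
  have horder : orderOf g = q ^ 2 - 1 := gen_order q hq1 E hE γ hγ hγ0
  have hNat : (q + 1) * (q - 1) = q ^ 2 - 1 := by
    obtain ⟨k, rfl⟩ : ∃ k, q = k + 2 := ⟨q - 2, by omega⟩
    have h1 : (k + 2) ^ 2 = k * k + 4 * k + 4 := by ring
    have h2 : (k + 2 + 1) * (k + 2 - 1) = k * k + 4 * k + 3 := by
      rw [show k + 2 - 1 = k + 1 from rfl]; ring
    omega
  have hdvd : (q - 1) ∣ (q ^ 2 - 1) := Dvd.intro_left _ hNat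
  have horderpow : orderOf (g ^ (q - 1)) = q + 1 := by
    rw [orderOf_pow, horder, Nat.gcd_eq_right hdvd]
    exact Nat.div_eq_of_eq_mul_left (by omega) hNat.symm
  refine ⟨((g ^ (q - 1) : Eˣ) : E), ?_⟩
  have h := IsPrimitiveRoot.orderOf ((g ^ (q - 1) : Eˣ) : E)
  rwa [orderOf_units, horderpow] at h

lemma zero_index_count (q : ℕ) (hq1 : 1 < q) (F E : Type) [Field F] [Fintype F] [DecidableEq F]
    [Field E] [Fintype E] [DecidableEq E] [Algebra F E]
    (hE : Fintype.card E = q ^ 2)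
    (γ : E) (hγ : ∀ x : E, x ≠ 0 → ∃ n : ℕ, γ ^ n = x)
    (e₂ e₃ : ℤ) (he₃ : Int.gcd (q ^ 2 - 1) e₃ = 1) (hcong : ((q : ℤ) - 1) ∣ (e₃ - e₂))
    (b : F) (c : E) :
    #{i : Fin (q ^ 2 - 1) | codeword3 q F E γ e₂ e₃ b c i = 0} =
      #{x : E | x ≠ 0 ∧ algebraMap F E b * x ^ (q + 1) + (c * x + (c * x) ^ q) = 0} := by
  classical
  have hq2 : 4 ≤ q ^ 2 := by nlinarith
  have hcast : ((q ^ 2 - 1 : ℕ) : ℤ) = (q : ℤ) ^ 2 - 1 := by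
    push_cast [Nat.cast_sub (by omega : 1 ≤ q ^ 2)]
    ring
  have hγ0 : γ ≠ 0 := gamma_ne_zero q hq1 E hE γ hγ
  set g : Eˣ := Units.mk0 γ hγ0 with hg
  have horder : orderOf g = q ^ 2 - 1 := gen_order q hq1 E hE γ hγ hγ0
  have hzpow_one : ∀ z : ℤ, ((q : ℤ) ^ 2 - 1) ∣ z → g ^ z = 1 := by
    intro z hz
    rw [← orderOf_dvd_iff_zpow_eq_one, horder, hcast]
    exact hz
  have hval : ∀ z : ℤ, ((g ^ z : Eˣ) : E) = γ ^ z := by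
    intro z
    rw [hg, Units.val_zpow_eq_zpow_val, Units.val_mk0]
  have hminj : Function.Injective (fun i : Fin (q ^ 2 - 1) => g ^ ((i : ℤ) * e₃)) := by
    intro i j hij
    simp only at hij
    have h1 : g ^ ((i : ℤ) * e₃ - (j : ℤ) * e₃) = 1 := by
      rw [zpow_sub, hij, mul_inv_cancel]
    rw [← orderOf_dvd_iff_zpow_eq_one, horder] at h1
    have h2 : ((q ^ 2 - 1 : ℕ) : ℤ) ∣ ((i : ℤ) - j) * e₃ := by
      convert h1 using 1; ring
    have hcop : IsCoprime ((q ^ 2 - 1 : ℕ) : ℤ) e₃ := by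
      rw [Int.isCoprime_iff_gcd_eq_one, hcast]
      exact he₃
    have h3 : ((q ^ 2 - 1 : ℕ) : ℤ) ∣ ((i : ℤ) - j) := hcop.dvd_of_dvd_mul_right h2
    have hi := i.isLt
    have hj := j.isLt
    have h0 : (i : ℤ) - j = 0 := Int.eq_zero_of_dvd_of_natAbs_lt_natAbs h3 (by omega)
    ext
    omega
  have hmbij : Function.Bijective (fun i : Fin (q ^ 2 - 1) => g ^ ((i : ℤ) * e₃)) := by
    rw [Fintype.bijective_iff_injective_and_card]
    refine ⟨hminj, ?_⟩
    rw [Fintype.card_fin, Fintype.card_units, hE]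
  have hexp : ∀ i : Fin (q ^ 2 - 1), γ ^ (((q : ℤ) + 1) * i * e₂) = (γ ^ ((i : ℤ) * e₃)) ^ (q + 1) := by
    intro i
    have hdvd : ((q : ℤ) ^ 2 - 1) ∣ (((q : ℤ) + 1) * i * e₂ - ((i : ℤ) * e₃) * ((q : ℕ) + 1 : ℕ)) := by
      obtain ⟨k, hk⟩ := hcong
      refine ⟨-((i : ℤ) * k), ?_⟩
      push_cast
      have : (e₂ : ℤ) = e₃ - ((q : ℤ) - 1) * k := by linarith [hk]
      rw [this]
      ring
    have hunit : g ^ (((q : ℤ) + 1) * i * e₂) = g ^ (((i : ℤ) * e₃) * ((q : ℕ) + 1 : ℕ)) := by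
      have h1 : g ^ ((((q : ℤ) + 1) * i * e₂) - ((i : ℤ) * e₃) * ((q : ℕ) + 1 : ℕ)) = 1 :=
        hzpow_one _ hdvd
      rw [zpow_sub, mul_inv_eq_one] at h1
      exact h1
    have := congrArg (Units.val) hunit
    rw [hval, hval] at this
    rw [this, zpow_mul, zpow_natCast]
  have hpt : ∀ i : Fin (q ^ 2 - 1), (codeword3 q F E γ e₂ e₃ b c i = 0) ↔
      (algebraMap F E b * (γ ^ ((i : ℤ) * e₃)) ^ (q + 1) +
        (c * γ ^ ((i : ℤ) * e₃) + (c * γ ^ ((i : ℤ) * e₃)) ^ q) = 0) := by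
    intro i
    unfold codeword3
    rw [hexp i]
  apply Finset.card_nbij (fun i : Fin (q ^ 2 - 1) => γ ^ ((i : ℤ) * e₃))
  · intro i hi
    simp only [Finset.mem_filter, Finset.mem_univ, true_and, Finset.mem_coe] at hi ⊢
    constructor
    · exact zpow_ne_zero _ hγ0
    · exact (hpt i).mp hi
  · intro i _ j _ hij
    apply hminj
    simp only
    ext
    rw [hval, hval]
    exact hij
  · intro x hx
    simp only [Finset.coe_filter, Finset.mem_univ, true_and, Set.mem_setOf_eq,
      Set.mem_image] at hx ⊢
    obtain ⟨hx0, hxeq⟩ := hx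
    obtain ⟨i, hi⟩ := hmbij.2 (Units.mk0 x hx0)
    refine ⟨i, ?_, ?_⟩
    · apply (hpt i).mpr
      have hxi : γ ^ ((i : ℤ) * e₃) = x := by
        have := congrArg Units.val hi
        rw [hval] at this
        simpa using this
      rw [hxi]
      exact hxeq
    · have := congrArg Units.val hi
      rw [hval] at this
      simpa using this

/-- If `gcd(e₃, q²-1) = 1` and `e₃ ≡ e₂ (mod q-1)`, then
`C = {(b·γ^{(q+1)ie₂} + Tr_{E/F}(c·γ^{ie₃}))_i : b ∈ F_q, c ∈ F_{q²}}` is a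
`[q²-1, 3, q(q-1)-1]` linear code over `F_q` with weight enumerator
`1 + (q²-1)(q-1)·z^{q(q-1)-1} + (q²-1)·z^{q(q-1)} + (q-1)·z^{q²-1}`. -/
theorem three_weight_code (q : ℕ) (hppow : ∃ (p n : ℕ), p.Prime ∧ 0 < n ∧ q = p ^ n)
    (F E : Type) [Field F] [Fintype F] [DecidableEq F] [Field E] [Fintype E] [DecidableEq E]
    [Algebra F E] (hF : Fintype.card F = q) (hE : Fintype.card E = q ^ 2)
    (γ : E) (hγ : ∀ x : E, x ≠ 0 → ∃ n : ℕ, γ ^ n = x)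
    (e₂ e₃ : ℤ) (he₃ : Int.gcd (q ^ 2 - 1) e₃ = 1) (hcong : ((q : ℤ) - 1) ∣ (e₃ - e₂)) :
    (∃ S : Submodule F (Fin (q ^ 2 - 1) → E),
        (S : Set (Fin (q ^ 2 - 1) → E)) =
            {v | ∃ (b : F) (c : E), v = codeword3 q F E γ e₂ e₃ b c} ∧
          Module.finrank F S = 3) ∧
      (∀ v ∈ {v | ∃ (b : F) (c : E), v = codeword3 q F E γ e₂ e₃ b c}, v ≠ 0 →
        q * (q - 1) - 1 ≤ hammingNorm v) ∧
      Set.ncard {v | (∃ (b : F) (c : E), v = codeword3 q F E γ e₂ e₃ b c) ∧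
        hammingNorm v = 0} = 1 ∧
      Set.ncard {v | (∃ (b : F) (c : E), v = codeword3 q F E γ e₂ e₃ b c) ∧
        hammingNorm v = q * (q - 1) - 1} = (q ^ 2 - 1) * (q - 1) ∧
      Set.ncard {v | (∃ (b : F) (c : E), v = codeword3 q F E γ e₂ e₃ b c) ∧
        hammingNorm v = q * (q - 1)} = q ^ 2 - 1 ∧
      Set.ncard {v | (∃ (b : F) (c : E), v = codeword3 q F E γ e₂ e₃ b c) ∧
        hammingNorm v = q ^ 2 - 1} = q - 1 := by
  classical
  obtain ⟨p, nn, hp, hnn, hqpn⟩ := hppow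
  have hq1 : 1 < q := by rw [hqpn]; exact Nat.one_lt_pow hnn.ne' hp.one_lt
  have hq2 : 4 ≤ q ^ 2 := by nlinarith
  have hQ2q : 2 * q ≤ q ^ 2 := by nlinarith
  have hmulq : q * (q - 1) = q ^ 2 - q := by
    obtain ⟨k, rfl⟩ : ∃ k, q = k + 2 := ⟨q - 2, by omega⟩
    have h1 : (k + 2) ^ 2 = k * k + 4 * k + 4 := by ring
    have h2 : (k + 2) * (k + 2 - 1) = k * k + 3 * k + 2 := by
      rw [show k + 2 - 1 = k + 1 from rfl]; ring
    omega
  obtain ⟨ζ, hζ⟩ := exists_primroot q hq1 E hE γ hγ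
  have hchar : CharP E p :=
    charP_of_card E p (2 * nn) hp (by rw [hE, hqpn, ← pow_mul, mul_comm]) (by omega)
  have hfact : Fact p.Prime := ⟨hp⟩
  have hadd : ∀ u v : E, (u + v) ^ q = u ^ q + v ^ q := by
    intro u v; rw [hqpn]; exact add_pow_char_pow u v p nn
  have halg : ∀ a : F, (algebraMap F E a) ^ q = algebraMap F E a := by
    intro a; rw [← map_pow, ← hF, FiniteField.pow_card]
  -- weight formula
  have hwt : ∀ (b : F) (c : E), hammingNorm (codeword3 q F E γ e₂ e₃ b c) =
      if b = 0 ∧ c = 0 then 0 else if b = 0 then q ^ 2 - q else if c = 0 then q ^ 2 - 1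
      else q ^ 2 - q - 1 := by
    intro b c
    have hz := zero_index_count q hq1 F E hE γ hγ e₂ e₃ he₃ hcong b c
    rw [zero_count q F E p nn hp hnn hqpn hF hE ζ hζ b c] at hz
    have hsplit := Finset.card_filter_add_card_filter_not
      (s := Finset.univ) (p := fun i : Fin (q ^ 2 - 1) => codeword3 q F E γ e₂ e₃ b c i = 0)
    rw [Finset.card_univ, Fintype.card_fin] at hsplit
    have hham : hammingNorm (codeword3 q F E γ e₂ e₃ b c) =
        #{i : Fin (q ^ 2 - 1) | ¬ codeword3 q F E γ e₂ e₃ b c i = 0} := rfl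
    rw [hham]
    split_ifs at hz ⊢ <;> omega
  have hzero : codeword3 q F E γ e₂ e₃ 0 0 = 0 := by
    funext i
    simp [codeword3, zero_pow (by omega : q ≠ 0)]
  have hker : ∀ (b : F) (c : E), codeword3 q F E γ e₂ e₃ b c = 0 → b = 0 ∧ c = 0 := by
    intro b c h
    by_contra hne
    have hw := hwt b c
    rw [h, if_neg hne] at hw
    have h0 : hammingNorm (0 : Fin (q ^ 2 - 1) → E) = 0 := by simp [hammingNorm]
    rw [h0] at hw
    split_ifs at hw <;> omega
  -- the linear map
  let φ : F × E →ₗ[F] (Fin (q ^ 2 - 1) → E) := {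
    toFun := fun bc => codeword3 q F E γ e₂ e₃ bc.1 bc.2
    map_add' := by
      rintro ⟨b, c⟩ ⟨b', c'⟩
      funext i
      show codeword3 q F E γ e₂ e₃ (b + b') (c + c') i =
        codeword3 q F E γ e₂ e₃ b c i + codeword3 q F E γ e₂ e₃ b' c' i
      unfold codeword3
      simp only [map_add, add_mul]
      rw [hadd (c * γ ^ ((i : ℤ) * e₃)) (c' * γ ^ ((i : ℤ) * e₃))]
      ring
    map_smul' := by
      rintro a ⟨b, c⟩
      funext i
      show codeword3 q F E γ e₂ e₃ (a * b) (a • c) i = a • codeword3 q F E γ e₂ e₃ b c i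
      unfold codeword3
      simp only [Algebra.smul_def, map_mul, mul_pow, halg]
      ring }
  have hφval : ∀ bc : F × E, φ bc = codeword3 q F E γ e₂ e₃ bc.1 bc.2 := fun _ => rfl
  have hφinj : Function.Injective φ := by
    rw [injective_iff_map_eq_zero]
    rintro ⟨b, c⟩ h
    obtain ⟨hb, hc⟩ := hker b c h
    simp [hb, hc, Prod.ext_iff]
  have hΦinj : Function.Injective (fun bc : F × E => codeword3 q F E γ e₂ e₃ bc.1 bc.2) := hφinj
  -- cardinalities of parameter sets
  have hcardF : #{b : F | b ≠ 0} = q - 1 := by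
    rw [Finset.filter_ne' univ 0, Finset.card_erase_of_mem (mem_univ 0), Finset.card_univ, hF]
  have hcardE : #{c : E | c ≠ 0} = q ^ 2 - 1 := by
    rw [Finset.filter_ne' univ 0, Finset.card_erase_of_mem (mem_univ 0), Finset.card_univ, hE]
  have hcardF0 : #{b : F | b = 0} = 1 := by
    rw [show ({b : F | b = 0} : Finset F) = {0} by ext b; simp]
    exact Finset.card_singleton 0
  have hcardE0 : #{c : E | c = 0} = 1 := by
    rw [show ({c : E | c = 0} : Finset E) = {0} by ext c; simp]
    exact Finset.card_singleton 0
  -- generic ncard computation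
  have himage : ∀ (P : F → Prop) (Q : E → Prop) [DecidablePred P] [DecidablePred Q],
      Set.ncard ((fun bc : F × E => codeword3 q F E γ e₂ e₃ bc.1 bc.2) ''
        {bc : F × E | P bc.1 ∧ Q bc.2}) = #{b : F | P b} * #{c : E | Q c} := by
    intro P Q _ _
    rw [Set.ncard_image_of_injective _ hΦinj]
    rw [Set.ncard_eq_toFinset_card']
    rw [show {bc : F × E | P bc.1 ∧ Q bc.2}.toFinset =
      ({b : F | P b} : Finset F) ×ˢ ({c : E | Q c} : Finset E) by
        ext bc; simp [Set.mem_toFinset]]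
    exact Finset.card_product _ _
  refine ⟨⟨LinearMap.range φ, ?_, ?_⟩, ?_, ?_, ?_, ?_, ?_⟩
  · ext v
    simp only [SetLike.mem_coe, LinearMap.mem_range, Set.mem_setOf_eq]
    constructor
    · rintro ⟨⟨b, c⟩, rfl⟩; exact ⟨b, c, rfl⟩
    · rintro ⟨b, c, rfl⟩; exact ⟨(b, c), rfl⟩
  · rw [LinearMap.finrank_range_of_inj hφinj]
    have hrankE : Module.finrank F E = 2 := by
      have hcard := Module.card_eq_pow_finrank (K := F) (V := E)
      rw [hF, hE] at hcard
      exact (Nat.pow_right_injective hq1 hcard.symm)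
    rw [Module.finrank_prod, Module.finrank_self, hrankE]
  · rintro v ⟨b, c, rfl⟩ hv0
    have hw := hwt b c
    have hbc : ¬(b = 0 ∧ c = 0) := by rintro ⟨rfl, rfl⟩; exact hv0 hzero
    rw [if_neg hbc] at hw
    split_ifs at hw <;> omega
  · -- weight 0 : the zero codeword
    have hset : {v | (∃ (b : F) (c : E), v = codeword3 q F E γ e₂ e₃ b c) ∧ hammingNorm v = 0}
        = {0} := by
      ext v
      simp only [Set.mem_setOf_eq, Set.mem_singleton_iff]
      constructor
      · rintro ⟨⟨b, c, rfl⟩, hw0⟩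
        rw [hwt b c] at hw0
        split_ifs at hw0 with h1 h2 h3
        · obtain ⟨rfl, rfl⟩ := h1; exact hzero
        · omega
        · omega
        · omega
      · rintro rfl
        exact ⟨⟨0, 0, hzero.symm⟩, by simp [hammingNorm]⟩
    rw [hset, Set.ncard_singleton]
  · -- weight q(q-1)-1 : both nonzero
    have hset : {v | (∃ (b : F) (c : E), v = codeword3 q F E γ e₂ e₃ b c) ∧
        hammingNorm v = q * (q - 1) - 1}
        = (fun bc : F × E => codeword3 q F E γ e₂ e₃ bc.1 bc.2) ''
          {bc : F × E | bc.1 ≠ 0 ∧ bc.2 ≠ 0} := by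
      ext v
      simp only [Set.mem_setOf_eq, Set.mem_image, Prod.exists]
      constructor
      · rintro ⟨⟨b, c, rfl⟩, hw0⟩
        rw [hwt b c] at hw0
        split_ifs at hw0 with h1 h2 h3
        · omega
        · omega
        · omega
        · exact ⟨b, c, ⟨h2, h3⟩, rfl⟩
      · rintro ⟨b, c, ⟨hb, hc⟩, rfl⟩
        refine ⟨⟨b, c, rfl⟩, ?_⟩
        rw [hwt b c, if_neg (by tauto), if_neg hb, if_neg hc]
        omega
    rw [hset, himage (fun b => b ≠ 0) (fun c => c ≠ 0), hcardF, hcardE]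
    ring
  · -- weight q(q-1) : b = 0, c ≠ 0
    have hset : {v | (∃ (b : F) (c : E), v = codeword3 q F E γ e₂ e₃ b c) ∧
        hammingNorm v = q * (q - 1)}
        = (fun bc : F × E => codeword3 q F E γ e₂ e₃ bc.1 bc.2) ''
          {bc : F × E | bc.1 = 0 ∧ bc.2 ≠ 0} := by
      ext v
      simp only [Set.mem_setOf_eq, Set.mem_image, Prod.exists]
      constructor
      · rintro ⟨⟨b, c, rfl⟩, hw0⟩
        rw [hwt b c] at hw0
        split_ifs at hw0 with h1 h2 h3
        · omega
        · refine ⟨b, c, ⟨h2, ?_⟩, rfl⟩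
          intro hc
          exact h1 ⟨h2, hc⟩
        · omega
        · omega
      · rintro ⟨b, c, ⟨hb, hc⟩, rfl⟩
        refine ⟨⟨b, c, rfl⟩, ?_⟩
        rw [hwt b c, if_neg (by tauto), if_pos hb]
        omega
    rw [hset, himage (fun b => b = 0) (fun c => c ≠ 0), hcardF0, hcardE]
    ring
  · -- weight q²-1 : b ≠ 0, c = 0
    have hset : {v | (∃ (b : F) (c : E), v = codeword3 q F E γ e₂ e₃ b c) ∧
        hammingNorm v = q ^ 2 - 1}
        = (fun bc : F × E => codeword3 q F E γ e₂ e₃ bc.1 bc.2) ''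
          {bc : F × E | bc.1 ≠ 0 ∧ bc.2 = 0} := by
      ext v
      simp only [Set.mem_setOf_eq, Set.mem_image, Prod.exists]
      constructor
      · rintro ⟨⟨b, c, rfl⟩, hw0⟩
        rw [hwt b c] at hw0
        split_ifs at hw0 with h1 h2 h3
        · omega
        · omega
        · exact ⟨b, c, ⟨h2, h3⟩, rfl⟩
        · omega
      · rintro ⟨b, c, ⟨hb, hc⟩, rfl⟩
        refine ⟨⟨b, c, rfl⟩, ?_⟩
        rw [hwt b c, if_neg (by tauto), if_neg hb, if_pos hc]
    rw [hset, himage (fun b => b ≠ 0) (fun c => c = 0), hcardF, hcardE0]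
    ring
end

section
/- Let q be a prime power. The number of pairs (e_2 mod q-1, e_3 mod q^2-1) up to the natural equivalence giving distinct cyclic codes C_{((q+1)e_2, e_3)} satisfying gcd(e_3, q^2-1) = 1 and e_3 ≡ e_2 (mod q-1) is φ(q^2-1)/2, where φ is the Euler totient function. -/
open Polynomial
open Polynomial

-- key exponent lemma
lemma aux_gamma_key {E : Type} [Field E] [Fintype E] [DecidableEq E] {γ : E} (hγ0 : γ ≠ 0)
    (hγ : ∀ x : E, x ≠ 0 → ∃ n : ℕ, γ ^ n = x) (a b : ℤ) :
    γ ^ a = γ ^ b ↔ ((Fintype.card E - 1 : ℕ) : ℤ) ∣ a - b := by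
  set u₀ : Eˣ := Units.mk0 γ hγ0 with hu₀
  have hord : orderOf u₀ = Fintype.card E - 1 := by
    have h1 : ∀ x : Eˣ, x ∈ Subgroup.zpowers u₀ := by
      intro x
      obtain ⟨m, hm⟩ := hγ (x : E) (Units.ne_zero x)
      exact ⟨(m : ℤ), by ext; simpa [Units.val_zpow_eq_zpow_val, hu₀] using hm⟩
    rw [orderOf_eq_card_of_forall_mem_zpowers h1, Nat.card_eq_fintype_card, Fintype.card_units]
  have h1 : γ ^ a = γ ^ b ↔ u₀ ^ a = u₀ ^ b := by
    constructor
    · intro h; ext; simpa [Units.val_zpow_eq_zpow_val, hu₀] using h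
    · intro h
      have := congrArg (Units.val) h
      simpa [Units.val_zpow_eq_zpow_val, hu₀] using this
  rw [h1, ← hord]
  constructor
  · intro h
    rw [orderOf_dvd_iff_zpow_eq_one, zpow_sub, h, mul_inv_cancel]
  · intro h
    have := orderOf_dvd_iff_zpow_eq_one.mp h
    rw [zpow_sub, mul_inv_eq_one] at this
    exact this

lemma aux_fix {q : ℕ} (hq : 2 ≤ q) {F E : Type} [Field F] [Fintype F] [Field E] [Fintype E]
    [DecidableEq E] [Algebra F E] (hF : Fintype.card F = q) :
    ∀ x : E, x ^ q = x → ∃ a : F, algebraMap F E a = x := by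
  have halg : ∀ a : F, (algebraMap F E a) ^ q = algebraMap F E a := by
    intro a
    rw [← map_pow, ← hF, FiniteField.pow_card]
  set A : Finset E := Finset.univ.filter (fun x => x ^ q = x) with hA
  set B : Finset E := Finset.univ.image (algebraMap F E) with hB
  have hBA : B ⊆ A := by
    intro x hx
    simp only [hB, Finset.mem_image] at hx
    obtain ⟨a, _, rfl⟩ := hx
    simp only [hA, Finset.mem_filter, Finset.mem_univ, true_and]
    exact halg a
  have hcardB : B.card = q := by
    rw [hB, Finset.card_image_of_injective _ (algebraMap F E).injective, Finset.card_univ, hF]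
  have hPq : (X ^ q - X : E[X]) ≠ 0 := by
    intro h
    have h2 : (X ^ q - X : E[X]).coeff q = 0 := by rw [h]; simp
    rw [Polynomial.coeff_sub, Polynomial.coeff_X_pow, if_pos rfl,
      Polynomial.coeff_X_of_ne_one (by omega : q ≠ 1)] at h2
    norm_num at h2
  have hcardA : A.card ≤ q := by
    have hsub : A ⊆ (X ^ q - X : E[X]).roots.toFinset := by
      intro x hx
      simp only [hA, Finset.mem_filter, Finset.mem_univ, true_and] at hx
      rw [Multiset.mem_toFinset, Polynomial.mem_roots hPq]
      simp [Polynomial.IsRoot, hx, sub_eq_zero]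
    calc A.card ≤ (X ^ q - X : E[X]).roots.toFinset.card := Finset.card_le_card hsub
      _ ≤ Multiset.card (X ^ q - X : E[X]).roots := Multiset.toFinset_card_le _
      _ ≤ (X ^ q - X : E[X]).natDegree := Polynomial.card_roots' _
      _ ≤ q := by
          refine le_trans (Polynomial.natDegree_sub_le _ _) ?_
          simp [Polynomial.natDegree_X_pow, Polynomial.natDegree_X]
          omega
  have hAB : A = B := (Finset.eq_of_subset_of_card_le hBA (le_trans hcardA hcardB.ge)).symm
  intro x hx
  have : x ∈ A := by simp [hA, hx]
  rw [hAB, hB] at this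
  simpa using this

-- the ring hom x ↦ x ^ q, given additivity
def auxPowHom {E : Type} [Field E] {q : ℕ} (hq : 2 ≤ q)
    (hadd : ∀ x y : E, (x + y) ^ q = x ^ q + y ^ q) : E →+* E where
  toFun := fun x => x ^ q
  map_one' := one_pow q
  map_mul' := fun x y => mul_pow x y q
  map_zero' := zero_pow (by omega)
  map_add' := hadd

-- conjugation invariance of minimal polynomials
lemma aux_conj {q : ℕ} (hq : 2 ≤ q) {F E : Type} [Field F] [Finite F] [Field E] [Finite E]
    [Algebra F E] (hadd : ∀ x y : E, (x + y) ^ q = x ^ q + y ^ q)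
    (halg : ∀ a : F, (algebraMap F E a) ^ q = algebraMap F E a) (α : E) :
    minpoly F (α ^ q) = minpoly F α := by
  haveI : Module.Finite F E := Module.finite_iff_finite.mpr inferInstance
  have hint : ∀ x : E, IsIntegral F x := fun x => IsIntegral.of_finite F x
  set φ : E →+* E := auxPowHom hq hadd with hφdef
  have hφ : ∀ x : E, φ x = x ^ q := fun x => rfl
  have hAeval : Polynomial.aeval (α ^ q) (minpoly F α) = 0 := by
    have h0 : φ (Polynomial.aeval α (minpoly F α)) = 0 := by rw [minpoly.aeval, map_zero]
    rw [Polynomial.aeval_def, Polynomial.hom_eval₂] at h0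
    have hcomp : φ.comp (algebraMap F E) = algebraMap F E := by
      ext a; rw [RingHom.comp_apply, hφ, halg]
    rw [hcomp, hφ] at h0
    rw [Polynomial.aeval_def]
    exact h0
  have hdvd : minpoly F (α ^ q) ∣ minpoly F α := minpoly.dvd F _ hAeval
  exact Polynomial.eq_of_monic_of_associated (minpoly.monic (hint _)) (minpoly.monic (hint _))
    ((minpoly.irreducible (hint _)).associated_of_dvd (minpoly.irreducible (hint _)) hdvd)

-- quadratic cover polynomial
lemma aux_cover {q : ℕ} (hq : 2 ≤ q) {F E : Type} [Field F] [Fintype F] [Field E] [Fintype E]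
    [DecidableEq E] [Algebra F E] (hF : Fintype.card F = q) (hE : Fintype.card E = q ^ 2)
    (hadd : ∀ x y : E, (x + y) ^ q = x ^ q + y ^ q) (α : E) :
    ∃ g : Polynomial F, ∀ y : E, Polynomial.aeval y g = (y - α) * (y - α ^ q) := by
  have hpow2 : ∀ x : E, x ^ (q ^ 2) = x := by
    intro x
    have := FiniteField.pow_card x
    rwa [hE] at this
  have hqq : ∀ x : E, (x ^ q) ^ q = x := by
    intro x
    rw [← pow_mul, ← pow_two, hpow2]
  have hc : (α + α ^ q) ^ q = α + α ^ q := by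
    rw [hadd, hqq, add_comm]
  have hd : (α * α ^ q) ^ q = α * α ^ q := by
    rw [mul_pow, hqq, mul_comm]
  obtain ⟨c, hcc⟩ := aux_fix hq hF _ hc
  obtain ⟨d, hdd⟩ := aux_fix hq hF _ hd
  refine ⟨X ^ 2 - C c * X + C d, fun y => ?_⟩
  have : Polynomial.aeval y (X ^ 2 - C c * X + C d : Polynomial F)
      = y ^ 2 - (algebraMap F E c) * y + algebraMap F E d := by
    simp [Polynomial.aeval_def]
  rw [this, hcc, hdd]
  ring
/-- The number of distinct cyclic codes `C_{((q+1)e₂,e₃)}` (counted via their parity-check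
polynomials `h_{(q+1)e₂}(x)h_{e₃}(x)`, with `h_a` the minimal polynomial of `γ^{-a}` over
`F_q`) satisfying `gcd(e₃, q²-1) = 1` and `e₃ ≡ e₂ (mod q-1)` is `φ(q²-1)/2`. -/
theorem count_three_weight_codes (q : ℕ) (hppow : ∃ (p n : ℕ), p.Prime ∧ 0 < n ∧ q = p ^ n)
    (F E : Type) [Field F] [Fintype F] [DecidableEq F] [Field E] [Fintype E] [DecidableEq E]
    [Algebra F E] (hF : Fintype.card F = q) (hE : Fintype.card E = q ^ 2)
    (γ : E) (hγ : ∀ x : E, x ≠ 0 → ∃ n : ℕ, γ ^ n = x) :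
    Set.ncard {P : Polynomial F | ∃ e₂ e₃ : ℤ,
        Int.gcd (q ^ 2 - 1) e₃ = 1 ∧ ((q : ℤ) - 1) ∣ (e₃ - e₂) ∧
        P = minpoly F (γ ^ (-(((q : ℤ) + 1) * e₂))) * minpoly F (γ ^ (-e₃))} * 2 =
      Nat.totient (q ^ 2 - 1) := by
  classical
  obtain ⟨p, m, hp, hm, hqpm⟩ := hppow
  have hq2 : 2 ≤ q := by
    rw [hqpm]
    calc 2 ≤ p := hp.two_le
      _ ≤ p ^ m := Nat.le_self_pow hm.ne' p
  set N : ℕ := q ^ 2 - 1 with hNdef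
  have hN1 : N + 1 = q ^ 2 := by
    have : 1 ≤ q ^ 2 := Nat.one_le_pow _ _ (by omega)
    omega
  have hq2' : q ^ 2 = q * q := by ring
  have hN3 : 3 ≤ N := by nlinarith
  haveI : NeZero N := ⟨by omega⟩
  have hNcast : (N : ℤ) = (q : ℤ) ^ 2 - 1 := by
    have : ((N : ℤ) + 1) = ((q : ℤ)) ^ 2 := by exact_mod_cast congrArg (Nat.cast : ℕ → ℤ) hN1
    omega
  have hNfac : (N : ℤ) = ((q : ℤ) + 1) * ((q : ℤ) - 1) := by rw [hNcast]; ring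
  -- γ is nonzero
  have hγ0 : γ ≠ 0 := by
    intro h
    have h4 : 4 ≤ Fintype.card E := by rw [hE]; nlinarith
    have h01 : ∀ x : E, x = 0 ∨ x = 1 := by
      intro x
      by_cases hx : x = 0
      · exact Or.inl hx
      · obtain ⟨k, hk⟩ := hγ x hx
        rcases Nat.eq_zero_or_pos k with hk0 | hk0
        · right; rw [hk0, pow_zero] at hk; exact hk.symm
        · rw [h, zero_pow hk0.ne'] at hk; exact absurd hk.symm hx
    have hsub : (Finset.univ : Finset E) ⊆ {0, 1} := by
      intro x _
      rcases h01 x with h | h <;> simp [h]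
    have := Finset.card_le_card hsub
    have h2 : Fintype.card E ≤ 2 := by
      rw [← Finset.card_univ]
      exact le_trans (Finset.card_le_card hsub) (le_of_eq (Finset.card_pair zero_ne_one))
    omega
  have hkey : ∀ a b : ℤ, γ ^ a = γ ^ b ↔ (N : ℤ) ∣ a - b := by
    intro a b
    have := aux_gamma_key hγ0 hγ a b
    rwa [hE, show q ^ 2 - 1 = N from rfl] at this
  -- characteristic
  haveI hcharE : CharP E p := by
    obtain ⟨k, hrp, hcard⟩ := FiniteField.card E (ringChar E)
    have hpr : p = ringChar E := by
      have hpd : p ∣ ringChar E ^ (k : ℕ) := by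
        rw [← hcard, hE, hqpm, ← pow_mul]
        exact dvd_pow_self p (by positivity)
      exact (Nat.prime_dvd_prime_iff_eq hp hrp).mp (hp.dvd_of_dvd_pow hpd)
    rw [hpr]
    infer_instance
  haveI : Fact p.Prime := ⟨hp⟩
  have hadd : ∀ x y : E, (x + y) ^ q = x ^ q + y ^ q := by
    intro x y
    rw [hqpm]
    exact add_pow_char_pow x y p m
  have halg : ∀ a : F, (algebraMap F E a) ^ q = algebraMap F E a := by
    intro a
    rw [← map_pow, ← hF, FiniteField.pow_card]
  -- coprimality of q and N
  have hqN : Nat.Coprime q N := by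
    rw [← Nat.isCoprime_iff_coprime]
    exact ⟨(q : ℤ), -1, by rw [hNcast]; ring⟩
  set uq : (ZMod N)ˣ := ZMod.unitOfCoprime q hqN with huq
  -- the parametrization
  set f : (ZMod N)ˣ → Polynomial F := fun u =>
    minpoly F (γ ^ (-(((q : ℤ) + 1) * (((u : ZMod N).val : ℤ))))) *
      minpoly F (γ ^ (-(((u : ZMod N).val : ℤ)))) with hf
  -- val-mod helper
  have hvmod : ∀ (u : (ZMod N)ˣ) (a : ℤ), ((a : ZMod N) = (u : ZMod N)) →
      (N : ℤ) ∣ a - ((u : ZMod N).val : ℤ) := by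
    intro u a ha
    have h1 : (((((u : ZMod N).val : ℤ)) : ZMod N)) = (a : ZMod N) := by
      push_cast
      rw [ZMod.natCast_val, ZMod.cast_id, ha]
    rw [ZMod.intCast_eq_intCast_iff_dvd_sub] at h1
    exact h1
  -- coprimality of vals
  have hvcop : ∀ u : (ZMod N)ˣ, Nat.Coprime ((u : ZMod N).val) N :=
    fun u => ZMod.val_coe_unit_coprime u
  -- a unit's val is not divisible by q+1 (primitivity)
  have hNfacN : N = (q + 1) * (q - 1) := by
    have h4 : (((q + 1) * (q - 1) : ℕ) : ℤ) = (N : ℤ) := by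
      push_cast [Nat.cast_sub (by omega : 1 ≤ q)]
      rw [hNfac]
    exact_mod_cast h4.symm
  have hq1N : (q + 1) ∣ N := hNfacN ▸ dvd_mul_right _ _
  have hprim : ∀ u : (ZMod N)ˣ, ¬ ((q : ℤ) + 1) ∣ (((u : ZMod N).val : ℤ)) := by
    intro u hdvd
    have h1 : (q + 1) ∣ (u : ZMod N).val := by exact_mod_cast hdvd
    have h4 := Nat.dvd_gcd h1 hq1N
    have h5 : q + 1 ∣ 1 := (hvcop u) ▸ h4
    have := Nat.le_of_dvd one_pos h5
    omega
  haveI : Module.Finite F E := Module.finite_iff_finite.mpr inferInstance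
  have hzp : ∀ a : ℤ, (γ ^ a) ^ q = γ ^ (a * (q : ℤ)) := by
    intro a
    rw [zpow_mul, zpow_natCast]
  have hq1 : ((q : ℤ) - 1) ≠ 0 := by
    have : (2 : ℤ) ≤ (q : ℤ) := by exact_mod_cast hq2
    omega
  -- powers of γ with unit exponents are not Frobenius-fixed
  have hnotfix : ∀ u : (ZMod N)ˣ,
      ¬ ((γ ^ (-(((u : ZMod N).val : ℤ)))) ^ q = γ ^ (-(((u : ZMod N).val : ℤ)))) := by
    intro u hfix
    set a : ℤ := ((u : ZMod N).val : ℤ)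
    rw [hzp, hkey] at hfix
    obtain ⟨k, hk⟩ := hfix
    rw [hNfac] at hk
    refine hprim u ⟨-k, ?_⟩
    apply mul_left_cancel₀ hq1
    linear_combination -hk
  -- the set is the range of f
  have hrange : {P : Polynomial F | ∃ e₂ e₃ : ℤ,
        Int.gcd (q ^ 2 - 1) e₃ = 1 ∧ ((q : ℤ) - 1) ∣ (e₃ - e₂) ∧
        P = minpoly F (γ ^ (-(((q : ℤ) + 1) * e₂))) * minpoly F (γ ^ (-e₃))} = Set.range f := by
    ext P
    simp only [Set.mem_setOf_eq, Set.mem_range]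
    constructor
    · rintro ⟨e₂, e₃, hgcd, hdv, rfl⟩
      have hgcd' : Int.gcd (N : ℤ) e₃ = 1 := by rw [hNcast]; exact_mod_cast hgcd
      have hcopZ : IsCoprime ((N : ℤ)) e₃ := Int.isCoprime_iff_gcd_eq_one.mpr hgcd'
      set w : ℕ := ((e₃ : ZMod N)).val with hw
      have hwe' : ((w : ℕ) : ZMod N) = (e₃ : ZMod N) := by
        rw [hw, ZMod.natCast_val, ZMod.cast_id]
      have hwe : ((w : ℤ) : ZMod N) = (e₃ : ZMod N) := by push_cast; exact hwe'
      have hNdvd : (N : ℤ) ∣ e₃ - w := (ZMod.intCast_eq_intCast_iff_dvd_sub _ _ _).mp hwe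
      have hcopw : Nat.Coprime w N := by
        rw [← Nat.isCoprime_iff_coprime]
        obtain ⟨k, hk⟩ := hNdvd
        have h5 : IsCoprime ((N : ℤ)) ((w : ℤ)) := by
          have h6 : (w : ℤ) = e₃ + (N : ℤ) * (-k) := by linarith
          rw [h6]
          exact hcopZ.add_mul_left_right (-k)
        exact h5.symm
      refine ⟨ZMod.unitOfCoprime w hcopw, ?_⟩
      set v : ℤ := (((ZMod.unitOfCoprime w hcopw : (ZMod N)ˣ) : ZMod N).val : ℤ) with hv
      have hval : (N : ℤ) ∣ e₃ - v := by
        apply hvmod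
        rw [ZMod.coe_unitOfCoprime]
        exact hwe'.symm
      have h2 : γ ^ (-v) = γ ^ (-e₃) := by
        rw [hkey]
        obtain ⟨k, hk⟩ := hval
        exact ⟨k, by linarith⟩
      have h3 : γ ^ (-(((q : ℤ) + 1) * v)) = γ ^ (-(((q : ℤ) + 1) * e₂)) := by
        rw [hkey]
        obtain ⟨k1, hk1⟩ := hdv
        obtain ⟨k2, hk2⟩ := hval
        exact ⟨((q : ℤ) + 1) * k2 - k1, by linear_combination ((q : ℤ) + 1) * hk2
          - ((q : ℤ) + 1) * hk1 + k1 * hNfac⟩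
      rw [hf]
      simp only
      rw [h2, h3]
    · rintro ⟨u, rfl⟩
      refine ⟨(((u : ZMod N).val : ℤ)), (((u : ZMod N).val : ℤ)), ?_, ⟨0, by ring⟩, ?_⟩
      · have : Int.gcd (N : ℤ) (((u : ZMod N).val : ℤ)) = 1 := by
          rw [Int.gcd_natCast_natCast]
          exact (hvcop u).symm
        rw [← hNcast]
        exact this
      · rw [hf]
  have hconj : ∀ α : E, minpoly F (α ^ q) = minpoly F α := fun α => aux_conj hq2 hadd halg α
  -- the fiber description
  have hfib : ∀ u w : (ZMod N)ˣ, f u = f w ↔ w = u ∨ w = uq * u := by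
    intro u w
    set a : ℤ := ((u : ZMod N).val : ℤ) with ha
    set b : ℤ := ((w : ZMod N).val : ℤ) with hb
    have hau : ((a : ℤ) : ZMod N) = (u : ZMod N) := by
      rw [ha]; push_cast; rw [ZMod.natCast_val, ZMod.cast_id]
    have hbw : ((b : ℤ) : ZMod N) = (w : ZMod N) := by
      rw [hb]; push_cast; rw [ZMod.natCast_val, ZMod.cast_id]
    constructor
    · intro huw
      set α : E := γ ^ (-a) with hα
      set β : E := γ ^ (-b) with hβ
      have h0 : Polynomial.aeval β (f u) = 0 := by
        rw [huw, hf]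
        simp only [map_mul]
        rw [← hβ, minpoly.aeval, mul_zero]
      rw [hf] at h0
      simp only [map_mul] at h0
      rcases mul_eq_zero.mp h0 with hL | hQ
      · exfalso
        have hfx : (γ ^ (-(((q : ℤ) + 1) * a))) ^ q = γ ^ (-(((q : ℤ) + 1) * a)) := by
          rw [hzp, hkey]
          exact ⟨-a, by rw [hNfac]; ring⟩
        obtain ⟨c, hc⟩ := aux_fix hq2 hF _ hfx
        rw [← hc, minpoly.eq_X_sub_C] at hL
        simp only [map_sub, Polynomial.aeval_X, Polynomial.aeval_C] at hL
        have hβc : β = algebraMap F E c := by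
          have := sub_eq_zero.mp hL
          exact this
        apply hnotfix w
        rw [← hb, ← hβ, hβc, halg]
      · obtain ⟨g, hg⟩ := aux_cover hq2 hF hE hadd α
        have hg0 : Polynomial.aeval α g = 0 := by rw [hg]; simp
        obtain ⟨t, ht⟩ := minpoly.dvd F α hg0
        have hβg : Polynomial.aeval β g = 0 := by rw [ht, map_mul, hQ, zero_mul]
        rw [hg] at hβg
        rcases mul_eq_zero.mp hβg with h1 | h1
        · left
          have h2 : β = α := sub_eq_zero.mp h1
          rw [hβ, hα, hkey] at h2
          have h4 : ((b : ℤ) : ZMod N) = ((a : ℤ) : ZMod N) := by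
            rw [ZMod.intCast_eq_intCast_iff_dvd_sub]
            obtain ⟨k, hk⟩ := h2
            exact ⟨k, by linarith⟩
          apply Units.ext
          rw [← hau, ← hbw, h4]
        · right
          have h2 : β = α ^ q := sub_eq_zero.mp h1
          rw [hβ, hα, hzp, hkey] at h2
          have h4 : ((b : ℤ) : ZMod N) = ((a * q : ℤ) : ZMod N) := by
            rw [ZMod.intCast_eq_intCast_iff_dvd_sub]
            obtain ⟨k, hk⟩ := h2
            exact ⟨k, by linarith⟩
          apply Units.ext
          rw [← hbw, h4, Units.val_mul, huq, ZMod.coe_unitOfCoprime, ← hau]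
          push_cast
          ring
    · rintro (rfl | rfl)
      · rfl
      · -- f u = f (uq * u), where w := uq * u
        have h4 : ((((q : ℤ) * a : ℤ)) : ZMod N) = ((uq * u : (ZMod N)ˣ) : ZMod N) := by
          rw [Units.val_mul, huq, ZMod.coe_unitOfCoprime, ← hau]
          push_cast
          ring
        have h5 : (N : ℤ) ∣ (q : ℤ) * a - b := hvmod _ _ h4
        obtain ⟨k, hk⟩ := h5
        rw [hf]
        simp only
        rw [← ha, ← hb]
        have h6 : γ ^ (-(((q : ℤ) + 1) * a)) = γ ^ (-(((q : ℤ) + 1) * b)) := by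
          rw [hkey]
          exact ⟨-(((q : ℤ) + 1) * k) + a, by linear_combination (-(q : ℤ) - 1) * hk - a * hNcast⟩
        have h7 : γ ^ (-b) = (γ ^ (-a)) ^ q := by
          rw [hzp, hkey]
          exact ⟨k, by linarith⟩
        rw [h6, h7, hconj]
  -- uq * u is never u
  have hne : ∀ u : (ZMod N)ˣ, uq * u ≠ u := by
    intro u h
    have h1 : uq = 1 := by
      have h2 : uq * u = 1 * u := by rw [h, one_mul]
      exact mul_right_cancel h2
    have h2 : ((q : ℕ) : ZMod N) = ((1 : ℕ) : ZMod N) := by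
      have := congrArg (fun x : (ZMod N)ˣ => (x : ZMod N)) h1
      simp only [huq, ZMod.coe_unitOfCoprime, Units.val_one] at this
      rw [this]
      norm_num
    rw [ZMod.natCast_eq_natCast_iff] at h2
    have hqN' : q < N := by nlinarith
    have h3 : q % N = 1 % N := h2
    rw [Nat.mod_eq_of_lt hqN', Nat.mod_eq_of_lt (by omega)] at h3
    omega
  -- counting
  have hcards : Fintype.card (ZMod N)ˣ = (Finset.image f Finset.univ).card * 2 := by
    rw [← Finset.card_univ,
      Finset.card_eq_sum_card_fiberwise (f := f)
        (t := Finset.image f Finset.univ)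
        (fun x _ => Finset.mem_image_of_mem f (Finset.mem_univ x))]
    rw [Finset.sum_congr rfl (g := fun _ => 2) ?_, Finset.sum_const, smul_eq_mul, mul_comm]
    intro P hP
    obtain ⟨u, _, hu⟩ := Finset.mem_image.mp hP
    have hfilter : Finset.univ.filter (fun x => f x = P) = {u, uq * u} := by
      ext x
      simp only [Finset.mem_filter, Finset.mem_univ, true_and, Finset.mem_insert,
        Finset.mem_singleton]
      rw [← hu]
      constructor
      · intro h
        exact (hfib u x).mp h.symm
      · intro h
        exact ((hfib u x).mpr h).symm
    rw [hfilter, Finset.card_insert_of_notMem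
      (by simp only [Finset.mem_singleton]; exact fun hh => hne u hh.symm),
      Finset.card_singleton]
  have hrangecard : Set.ncard (Set.range f) = (Finset.image f Finset.univ).card := by
    have : Set.range f = ↑(Finset.image f Finset.univ) := by
      rw [Finset.coe_image, Finset.coe_univ, Set.image_univ]
    rw [this, Set.ncard_coe_finset]
  rw [hrange, hrangecard, ← ZMod.card_units_eq_totient N, hcards]
end

section
/- Let q be a prime power, γ a primitive element of F_{q^2}, χ' the canonical additive character of F_{q^2}, and χ that of F_q. Let N: F_{q^2} → F_q be the norm map. Then for any c ∈ F_{q^2}^* and integer j, Σ_{w ∈ F_{q^2}^*} χ'(c γ^{j} w^{q-1}) = -Σ_{ψ} G_{F_q}(ψ̄, χ)^2 ψ(N(c γ^{j})), where the sum is over all multiplicative characters ψ of F_q and G_{F_q}(ψ̄, χ) is the Gauss sum over F_q. -/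
/-!
The substitution `w ↦ w ^ (q - 1)` maps `E^*` onto the norm-one subgroup (the kernel of
`v ↦ v ^ (q + 1)` in the cyclic group `E^*`) with fibres of size `q - 1`. So the left side is
`q - 1` times the sum of `χ'` over the norm fibre `{v | N v = N (c γ^j)}`, and orthogonality of the
multiplicative characters of `F` writes `q - 1` times the indicator of that fibre as
`Σ_ψ ψ̄(N v) ψ(N (c γ^j))`. It remains to see the quadratic Davenport–Hasse relation
`Σ_v ψ̄(N v) χ(Tr v) = -G(ψ̄, χ)²`, which is a count. For `(s, t) ∈ F × F`, the elements `w ∈ E`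
with trace `s` and norm `t`, and the first coordinates of the pairs `(x, y) ∈ F × F` with
`x + y = s` and `x y = t`, are roots of `X² - s X + t` in `E`; a root common to both is a double
root, so in all cases the two counts add up to at most `2`. Both counts sum to `q²` over `F × F`,
so every bound is attained, and `Σ_w ψ̄(N w) χ(Tr w) + G² = 2 Σ_{s,t} ψ̄(t) χ(s) = 0` because `χ`
is nontrivial.
-/

open Finset

section TraceAddChar

noncomputable def traceAddChar (p : ℕ) [NeZero p] (F : Type*) [CommRing F] [Algebra (ZMod p) F] :
    AddChar F ℂ :=
  ZMod.stdAddChar.compAddMonoidHom (Algebra.trace (ZMod p) F).toAddMonoidHom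

theorem traceAddChar_apply (p : ℕ) [NeZero p] (F : Type) [Field F] [Fintype F]
    [Algebra (ZMod p) F] (x : F) : traceAddChar p F x = canAddChar p F x := by
  simp [traceAddChar, canAddChar, ZMod.stdAddChar_apply, ZMod.toCircle_apply]

variable (p : ℕ) [Fact p.Prime] (F : Type*) [Field F] [Finite F] [Algebra (ZMod p) F]

theorem traceAddChar_ne_one : traceAddChar p F ≠ 1 := by
  obtain ⟨x, hx⟩ := Algebra.trace_surjective (ZMod p) F 1
  refine AddChar.ne_one_iff.2 ⟨x, fun h => one_ne_zero (ZMod.injective_stdAddChar (N := p) ?_)⟩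
  simpa [traceAddChar, hx] using h

theorem traceAddChar_trace {E : Type*} [Field E] [Finite E] [Algebra (ZMod p) E] [Algebra F E]
    (w : E) : traceAddChar p E w = traceAddChar p F (Algebra.trace F E w) := by
  simp [traceAddChar, Algebra.trace_trace]

end TraceAddChar

theorem sum_units_eq_sum_filter_ne_zero {G₀ M : Type*} [GroupWithZero G₀] [Fintype G₀]
    [DecidableEq G₀] [AddCommMonoid M] (f : G₀ → M) :
    ∑ u : G₀ˣ, f u = ∑ x with x ≠ 0, f x := by
  rw [sum_subtype (p := (· ≠ 0)) _ (fun _ => by simp) f]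
  exact Fintype.sum_equiv unitsEquivNeZero _ _ fun _ => rfl

theorem ne_zero_of_forall_ne_zero_exists_pow_eq {G₀ : Type*} [GroupWithZero G₀] [Nontrivial G₀ˣ]
    {γ : G₀} (hγ : ∀ x : G₀, x ≠ 0 → ∃ n : ℕ, γ ^ n = x) : γ ≠ 0 := by
  obtain ⟨u, hu⟩ := exists_ne (1 : G₀ˣ)
  obtain ⟨n, hn⟩ := hγ u u.ne_zero
  rintro rfl
  rcases n with _ | n
  · exact hu (Units.ext (by simpa using hn.symm))
  · exact u.ne_zero (by simpa using hn.symm)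

namespace IsCyclic

variable {G : Type*} [CommGroup G] [IsCyclic G] {d e : ℕ}

theorem range_powMonoidHom_eq_ker [Finite G] (hde : Nat.card G = d * e) :
    (powMonoidHom d : G →* G).range = (powMonoidHom e).ker := by
  have hd : d ≠ 0 := by rintro rfl; exact Nat.card_pos.ne' (hde.trans (zero_mul e))
  refine Subgroup.eq_of_le_of_card_ge ?_ ?_
  · rintro _ ⟨g, rfl⟩
    simp [← pow_mul, ← hde]
  · rw [card_powMonoidHom_range, card_powMonoidHom_ker, hde, Nat.gcd_mul_left_left,
      Nat.gcd_mul_right_left, Nat.mul_div_cancel_left _ (Nat.pos_of_ne_zero hd)]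

variable [Fintype G] [DecidableEq G]

theorem card_filter_pow_eq (hde : Nat.card G = d * e) {h : G} (hh : h ^ e = 1) :
    #{g : G | g ^ d = h} = d := by
  obtain ⟨g₀, rfl⟩ : h ∈ (powMonoidHom d : G →* G).range := by
    rwa [range_powMonoidHom_eq_ker hde]
  change #{g | powMonoidHom d g = powMonoidHom d g₀} = d
  rw [MonoidHom.card_fiber_eq_of_mem_range (powMonoidHom d) ⟨g₀, rfl⟩ ⟨1, map_one _⟩,
    ← Fintype.card_subtype, ← Nat.card_eq_fintype_card]
  change Nat.card (powMonoidHom d : G →* G).ker = d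
  rw [card_powMonoidHom_ker, hde, Nat.gcd_mul_right_left]

theorem sum_pow_eq_nsmul_sum {M : Type*} [AddCommMonoid M] (hde : Nat.card G = d * e)
    (f : G → M) : ∑ g, f (g ^ d) = d • ∑ g with g ^ e = 1, f g := by
  have himage : univ.image (· ^ d) = ({g | g ^ e = 1} : Finset G) := by
    ext h
    simpa using SetLike.ext_iff.1 (range_powMonoidHom_eq_ker hde) h
  rw [sum_comp, himage, smul_sum]
  refine sum_congr rfl fun h hh => ?_
  rw [card_filter_pow_eq hde (mem_filter.1 hh).2]

theorem sum_mul_pow_eq_nsmul_sum {M : Type*} [AddCommMonoid M] (hde : Nat.card G = d * e)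
    (f : G → M) (a : G) : ∑ g, f (a * g ^ d) = d • ∑ g with g ^ e = a ^ e, f g := by
  rw [sum_pow_eq_nsmul_sum hde (fun g => f (a * g))]
  congr 1
  refine sum_nbij' (a * ·) (a⁻¹ * ·) ?_ ?_ ?_ ?_ ?_ <;> intro g hg
  all_goals simp_all [mul_pow]

end IsCyclic

namespace MulChar

theorem sum_apply_eq_ite {M R : Type*} [CommMonoid M] [Finite M] [DecidableEq M] [CommRing R]
    [IsDomain R] [HasEnoughRootsOfUnity R (Monoid.exponent Mˣ)] [Fintype (MulChar M R)] (a : M) :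
    ∑ χ : MulChar M R, χ a = if a = 1 then (Nat.card Mˣ : R) else 0 := by
  split_ifs with ha
  · simp [ha, ← Nat.card_eq_fintype_card, card_eq_card_units_of_hasEnoughRootsOfUnity]
  · obtain ⟨χ, hχ⟩ := exists_apply_ne_one_of_hasEnoughRootsOfUnity M R ha
    refine eq_zero_of_mul_eq_self_left hχ ?_
    simp only [mul_sum, ← mul_apply]
    exact Fintype.sum_bijective _ (Group.mulLeft_bijective χ) _ _ fun _ ↦ rfl

theorem sum_inv_apply_mul_apply_eq_ite {F R : Type*} [Field F] [Finite F] [DecidableEq F]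
    [CommRing R] [IsDomain R] [HasEnoughRootsOfUnity R (Monoid.exponent Fˣ)]
    [Fintype (MulChar F R)] (x : F) {y : F} (hy : y ≠ 0) :
    ∑ χ : MulChar F R, χ⁻¹ x * χ y = if x = y then (Nat.card Fˣ : R) else 0 := by
  rcases eq_or_ne x 0 with rfl | hx
  · simp [hy.symm]
  · simp only [inv_apply', ← map_mul, sum_apply_eq_ite, inv_mul_eq_one₀ hx]

theorem sum_apply_mul_sum_inv_apply_eq {F R X : Type*} [Field F] [Fintype F] [DecidableEq F]
    [CommRing R] [IsDomain R] [HasEnoughRootsOfUnity R (Monoid.exponent Fˣ)]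
    [Fintype (MulChar F R)] [Fintype X] (n : X → F) (f : X → R) {y : F} (hy : y ≠ 0) :
    ∑ χ : MulChar F R, χ y * ∑ x, χ⁻¹ (n x) * f x =
      (Fintype.card F - 1) • ∑ x with n x = y, f x := by
  simp only [mul_sum]
  rw [sum_comm, sum_filter, smul_sum]
  refine sum_congr rfl fun x _ => ?_
  have hswap : ∑ χ : MulChar F R, χ y * (χ⁻¹ (n x) * f x) =
      (∑ χ : MulChar F R, χ⁻¹ (n x) * χ y) * f x := by
    rw [sum_mul]
    exact sum_congr rfl fun χ _ => by ring
  rw [hswap, sum_inv_apply_mul_apply_eq_ite _ hy, Nat.card_units, Nat.card_eq_fintype_card]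
  split_ifs <;> simp

end MulChar

theorem sum_filter_ne_zero_eq_gaussSum {F R : Type*} [Field F] [Fintype F] [DecidableEq F]
    [CommRing R] (χ : MulChar F R) (ψ : AddChar F R) :
    ∑ x with x ≠ 0, χ x * ψ x = gaussSum χ ψ :=
  sum_filter_of_ne fun x _ hx => by rintro rfl; exact hx (by rw [MulChar.map_zero, zero_mul])

theorem card_filter_sq_sub_mul_add_eq_zero_le_two {K : Type*} [CommRing K] [IsDomain K]
    [Fintype K] [DecidableEq K] (s t : K) :
    #{x : K | x ^ 2 - s * x + t = 0} ≤ 2 := by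
  rcases Finset.eq_empty_or_nonempty {x : K | x ^ 2 - s * x + t = 0} with h | ⟨u, hu⟩
  · simp [h]
  refine (card_le_card (t := {u, s - u}) fun x hx => ?_).trans card_le_two
  rw [mem_filter] at hu hx
  have : (x - u) * (x - (s - u)) = 0 := by linear_combination hx.2 - hu.2
  rcases mul_eq_zero.1 this with h | h
  · simp [sub_eq_zero.1 h]
  · simp [sub_eq_zero.1 h]

namespace FiniteField

variable {F E : Type*} [Field F] [Field E] [Algebra F E]

theorem finrank_eq_two_of_card_eq_sq [Fintype F] [Fintype E]
    (h : Fintype.card E = Fintype.card F ^ 2) : Module.finrank F E = 2 := by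
  refine Nat.pow_right_injective (Fintype.one_lt_card (α := F)) ?_
  simp only [← h, Module.card_eq_pow_finrank (K := F) (V := E)]

section

variable [Finite E] (h2 : Module.finrank F E = 2)
include h2

theorem algebraMap_trace_eq_add_pow_of_finrank_eq_two (w : E) :
    algebraMap F E (Algebra.trace F E w) = w + w ^ Nat.card F := by
  simp [algebraMap_trace_eq_sum_pow, h2, sum_range_succ]

theorem algebraMap_norm_eq_pow_of_finrank_eq_two (w : E) :
    algebraMap F E (Algebra.norm F w) = w ^ (Nat.card F + 1) := by
  simp [algebraMap_norm_eq_prod_pow, h2, prod_range_succ, pow_succ']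

end

theorem sum_mul_pow_card_sub_one_eq_nsmul_sum_norm_eq {M : Type*} [AddCommMonoid M] [Fintype F]
    [DecidableEq F] [Fintype E] [DecidableEq E] (hE : Fintype.card E = Fintype.card F ^ 2)
    (f : E → M) {a : E} (ha : a ≠ 0) :
    ∑ w with w ≠ 0, f (a * w ^ (Fintype.card F - 1)) =
      (Fintype.card F - 1) • ∑ v with Algebra.norm F v = Algebra.norm F a, f v := by
  set q := Fintype.card F
  have hnorm (v : E) : algebraMap F E (Algebra.norm F v) = v ^ (q + 1) := by
    rw [algebraMap_norm_eq_pow_of_finrank_eq_two (finrank_eq_two_of_card_eq_sq hE),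
      Nat.card_eq_fintype_card]
  have hcardE : Nat.card Eˣ = (q - 1) * (q + 1) := by
    rw [Nat.card_units, Nat.card_eq_fintype_card, hE]
    simpa [mul_comm] using Nat.sq_sub_sq q 1
  have hne (v : E) (hv : Algebra.norm F v = Algebra.norm F a) : v ≠ 0 := fun h0 =>
    Algebra.norm_ne_zero_iff (R := F).2 ha (by simpa [h0] using hv.symm)
  calc ∑ w with w ≠ 0, f (a * w ^ (q - 1))
      = ∑ w : Eˣ, f ↑(Units.mk0 a ha * w ^ (q - 1)) := by
        simp [sum_units_eq_sum_filter_ne_zero (fun w => f (a * w ^ (q - 1)))]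
    _ = (q - 1) • ∑ v : Eˣ with v ^ (q + 1) = Units.mk0 a ha ^ (q + 1), f v :=
        IsCyclic.sum_mul_pow_eq_nsmul_sum hcardE (fun v => f v) _
    _ = (q - 1) • ∑ v with Algebra.norm F v = Algebra.norm F a, f v := by
        rw [sum_filter, sum_filter,
          ← sum_filter_of_ne fun v _ h => hne v (by_contra fun hv => h (if_neg hv)),
          ← sum_units_eq_sum_filter_ne_zero]
        refine congrArg _ (sum_congr rfl fun v _ => if_congr ?_ rfl rfl)
        rw [Units.ext_iff, ← (algebraMap F E).injective.eq_iff, hnorm, hnorm]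
        simp

end FiniteField

section DavenportHasse

noncomputable def traceNorm (F : Type*) {E : Type*} [Field F] [Field E] [Algebra F E] (w : E) :
    F × F :=
  (Algebra.trace F E w, Algebra.norm F w)

def sumProd {F : Type*} [Field F] (y : F × F) : F × F := (y.1 + y.2, y.1 * y.2)

variable {F E : Type*} [Field F] [Fintype F] [DecidableEq F] [Field E] [Fintype E] [DecidableEq E]
  [Algebra F E] (h2 : Module.finrank F E = 2)
include h2

theorem card_fiber_traceNorm_add_card_fiber_sumProd_le_two (z : F × F) :
    #{w : E | traceNorm F w = z} + #{y : F × F | sumProd y = z} ≤ 2 := by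
  obtain ⟨s, t⟩ := z
  set A : Finset E := {w | traceNorm F w = (s, t)}
  set B : Finset E := image (fun y : F × F => algebraMap F E y.1) {y | sumProd y = (s, t)}
  set R : Finset E := {w | w ^ 2 - algebraMap F E s * w + algebraMap F E t = 0}
  have hAR : A ⊆ R := by
    intro w hw
    simp only [A, R, traceNorm, mem_filter, mem_univ, true_and, Prod.mk.injEq] at hw ⊢
    rw [← hw.1, ← hw.2, FiniteField.algebraMap_trace_eq_add_pow_of_finrank_eq_two h2,
      FiniteField.algebraMap_norm_eq_pow_of_finrank_eq_two h2]
    ring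
  have hBR : B ⊆ R := by
    intro w hw
    obtain ⟨⟨x, y⟩, hxy, rfl⟩ := mem_image.1 hw
    simp only [sumProd, mem_filter, mem_univ, true_and, Prod.mk.injEq] at hxy
    simp only [R, mem_filter, mem_univ, true_and, ← hxy.1, ← hxy.2, map_add, map_mul]
    ring
  have hB : #{y : F × F | sumProd y = (s, t)} = #B := by
    refine (card_image_of_injOn fun y hy y' hy' hyy' => ?_).symm
    simp only [sumProd, coe_filter, mem_univ, true_and, Set.mem_ofPred_eq, Prod.mk.injEq]
      at hy hy'
    have h1 : y.1 = y'.1 := (algebraMap F E).injective hyy'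
    exact Prod.ext h1 (by linear_combination hy.1 - hy'.1 - h1)
  rw [hB, ← card_union_add_card_inter]
  rcases (A ∩ B).eq_empty_or_nonempty with hempty | ⟨_, hmem⟩
  · rw [hempty, card_empty, add_zero]
    exact (card_le_card (union_subset hAR hBR)).trans
      (card_filter_sq_sub_mul_add_eq_zero_le_two _ _)
  · obtain ⟨hxA, hxB⟩ := mem_inter.1 hmem
    obtain ⟨⟨x, y⟩, -, rfl⟩ := mem_image.1 hxB
    -- a common root lies in `F`, which forces `X² - s X + t = (X - x)²`
    have hR : R ⊆ {algebraMap F E x} := by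
      intro w hw
      simp only [A, traceNorm, mem_filter, mem_univ, true_and, Prod.mk.injEq,
        Algebra.trace_algebraMap, Algebra.norm_algebraMap, h2] at hxA
      simp only [R, mem_filter, mem_univ, true_and, ← hxA.1, ← hxA.2, map_nsmul, map_pow] at hw
      have : (w - algebraMap F E x) ^ 2 = 0 := by linear_combination hw
      simp [sub_eq_zero.1 (pow_eq_zero_iff two_ne_zero |>.1 this)]
    have hle : ∀ u ⊆ R, #u ≤ 1 := fun u hu =>
      (card_le_card (hu.trans hR)).trans_eq (card_singleton _)
    linarith [hle (A ∪ B) (union_subset hAR hBR), hle (A ∩ B) (inter_subset_left.trans hAR)]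

theorem card_fiber_traceNorm_add_card_fiber_sumProd (z : F × F) :
    #{w : E | traceNorm F w = z} + #{y : F × F | sumProd y = z} = 2 := by
  have hE : Fintype.card E = Fintype.card (F × F) := by
    rw [Module.card_eq_pow_finrank (K := F), h2, Fintype.card_prod, sq]
  have htotal : ∑ z : F × F, (#{w : E | traceNorm F w = z} + #{y : F × F | sumProd y = z}) =
      ∑ _z : F × F, 2 := by
    rw [sum_add_distrib, ← card_eq_sum_card_fiberwise (by simp),
      ← card_eq_sum_card_fiberwise (by simp), sum_const, card_univ, card_univ, hE,
      smul_eq_mul, mul_two]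
  exact (sum_eq_sum_iff_of_le fun z _ =>
    card_fiber_traceNorm_add_card_fiber_sumProd_le_two h2 z).1 htotal z (mem_univ z)

/-- The Davenport–Hasse relation for a quadratic extension. -/
theorem sum_mulChar_norm_mul_addChar_trace {R : Type*} [CommRing R] [IsDomain R]
    (χ : MulChar F R) {ψ : AddChar F R} (hψ : ψ ≠ 1) :
    ∑ w : E, χ (Algebra.norm F w) * ψ (Algebra.trace F E w) = -gaussSum χ ψ ^ 2 := by
  let g : F × F → R := fun z => χ z.2 * ψ z.1
  have hgauss : gaussSum χ ψ ^ 2 = ∑ y, g (sumProd y) := by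
    rw [gaussSum, sq, sum_mul_sum, ← Fintype.sum_prod_type']
    refine sum_congr rfl fun y _ => ?_
    simp only [g, sumProd, map_mul, AddChar.map_add_eq_mul]
    ring
  have hzero : ∑ z, g z = 0 := by
    simp only [g, Fintype.sum_prod_type, ← sum_mul, ← mul_sum, AddChar.sum_eq_zero_of_ne_one hψ,
      mul_zero]
  have hsum : ∑ w : E, g (traceNorm F w) + gaussSum χ ψ ^ 2 = 0 := by
    rw [hgauss, ← sum_fiberwise' univ (traceNorm F), ← sum_fiberwise' univ sumProd,
      ← sum_add_distrib]
    simp only [sum_const, ← add_smul, card_fiber_traceNorm_add_card_fiber_sumProd h2, ← smul_sum,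
      hzero, smul_zero]
  exact eq_neg_of_add_eq_zero_left hsum

end DavenportHasse

/-- For `F = F_q`, `E = F_{q²}` with canonical additive characters `χ`, `χ'`, a primitive
element `γ` of `E`, `c ∈ E^*` and `j ∈ ℤ`:
`Σ_{w ∈ E^*} χ'(c·γʲ·w^{q-1}) = -Σ_ψ G_F(ψ̄,χ)²·ψ(N(c·γʲ))`, the sum ranging over all
multiplicative characters `ψ` of `F_q`, where `N = Algebra.norm F : E → F` is the norm map
and `G_F(ψ̄,χ) = Σ_{x ∈ F_q^*} ψ̄(x)χ(x)` (Davenport–Hasse). -/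
theorem sum_coset_char_eq_gauss (p q : ℕ) [Fact p.Prime] (F E : Type) [Field F] [Fintype F]
    [DecidableEq F] [Field E] [Fintype E] [DecidableEq E] [Algebra (ZMod p) F]
    [Algebra (ZMod p) E] [Algebra F E] (hF : Fintype.card F = q)
    (hE : Fintype.card E = q ^ 2)
    (γ : E) (hγ : ∀ x : E, x ≠ 0 → ∃ n : ℕ, γ ^ n = x)
    (c : E) (hc : c ≠ 0) (j : ℤ) :
    ∑ w ∈ Finset.univ.filter (fun w : E => w ≠ 0),
        canAddChar p E (c * γ ^ j * w ^ (q - 1)) =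
      -∑ᶠ ψ : MulChar F ℂ,
        (∑ x ∈ Finset.univ.filter (fun x : F => x ≠ 0), ψ⁻¹ x * canAddChar p F x) ^ 2 *
          ψ (Algebra.norm F (c * γ ^ j)) := by
  subst hF
  have := Fintype.ofFinite (MulChar F ℂ)
  have : Nontrivial Eˣ := by
    have := Fintype.one_lt_card (α := F)
    rw [← Fintype.one_lt_card_iff_nontrivial, Fintype.card_units, hE]
    exact Nat.lt_sub_of_add_lt (by nlinarith)
  have ha : c * γ ^ j ≠ 0 :=
    mul_ne_zero hc (zpow_ne_zero j (ne_zero_of_forall_ne_zero_exists_pow_eq hγ))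
  rw [finsum_eq_sum_of_fintype, ← sum_neg_distrib]
  simp only [← traceAddChar_apply]
  rw [FiniteField.sum_mul_pow_card_sub_one_eq_nsmul_sum_norm_eq hE _ ha,
    ← MulChar.sum_apply_mul_sum_inv_apply_eq _ _ (Algebra.norm_ne_zero_iff.2 ha)]
  refine sum_congr rfl fun χ _ => ?_
  simp only [traceAddChar_trace p F (E := E), sum_filter_ne_zero_eq_gaussSum,
    sum_mulChar_norm_mul_addChar_trace (FiniteField.finrank_eq_two_of_card_eq_sq hE) χ⁻¹
      (traceAddChar_ne_one p F)]
  ring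
end
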